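/- arXiv:0708.1179 — 11 statements merged into one kernel-verified Lean document; each statement's English description precedes it below -/
import Mathlib

section
/- Let K ≥ 1 be an integer and let G_{S,D}, G_{S,R_1}, …, G_{S,R_K}, G_{R_1,D}, …, G_{R_K,D} be jointly independent random variables, where each G_{i,j} is exponentially distributed with rate λ_{i,j} > 0. Fix r ∈ (0, 1/2). For s > 0 define the random decoding set D(s) ⊆ {1,…,K} by j ∈ D(s) iff 1 + s·G_{S,R_j} ≥ (1+s)^{2r}, and define the outage probability P(s) = Pr[(1 + s·G_{S,D})·(1 + s·Σ_{j∈D(s)} G_{R_j,D}) < (1+s)^{2r}] (the empty sum being 0). Then lim_{s→∞} (−ln P(s))/ln s = (K+1)(1−2r). -/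
/-!
Put `ε(s) = ((1+s)^{2r} - 1)/s`, so that a link with gain `g` is weak, `1 + s g < (1+s)^{2r}`,
iff `g < ε(s)`. Up to a null set, an outage forces the direct link to be weak and, for every
relay, its source–relay or its relay–destination link to be weak; conversely, if the direct link
and all source–relay links are weak, the decoding set is empty and the system is in outage. By
independence each such configuration of `K + 1` weak links has probability
`∏ (1 - e^{-λ ε}) ≍ ε^{K+1}`, hence `P(s) ≍ ε(s)^{K+1} ≍ s^{-(K+1)(1-2r)}`, and the exponent is
read off by taking logarithms.
-/

open MeasureTheory ProbabilityTheory Filter Real Asymptotics Finset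
open scoped Topology

namespace ProbabilityTheory

variable {Ω : Type*} [MeasurableSpace Ω] {μ : Measure Ω}

lemma measure_lt_of_map_eq_expMeasure {X : Ω → ℝ} {rate x : ℝ} (hrate : 0 < rate)
    (hX : μ.map X = expMeasure rate) (hx : 0 ≤ x) :
    μ {ω | X ω < x} = ENNReal.ofReal (1 - exp (-(rate * x))) := by
  have : IsProbabilityMeasure (expMeasure rate) := isProbabilityMeasure_expMeasure hrate
  have hXm : AEMeasurable X μ := .of_map_ne_zero (hX ▸ IsProbabilityMeasure.ne_zero _)
  rw [show {ω | X ω < x} = X ⁻¹' Set.Iio x from rfl,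
    ← Measure.map_apply_of_aemeasurable hXm measurableSet_Iio, hX, expMeasure, gammaMeasure,
    withDensity_apply _ measurableSet_Iio,
    setLIntegral_congr Iio_ae_eq_Iic, show gammaPDF 1 rate = exponentialPDF rate from rfl,
    lintegral_exponentialPDF_eq_antiDeriv hrate x, if_pos hx]

lemma iIndepFun.measureReal_forall_lt_eq_prod {κ : Type*} [Fintype κ] {X : κ → Ω → ℝ}
    {rate : κ → ℝ} (hX : iIndepFun X μ) (hrate : ∀ k, 0 < rate k)
    (hlaw : ∀ k, μ.map (X k) = expMeasure (rate k)) {ε : ℝ} (hε : 0 ≤ ε) :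
    μ.real {ω | ∀ k, X k ω < ε} = ∏ k, (1 - exp (-(rate k * ε))) := by
  have hsets : {ω | ∀ k, X k ω < ε} = ⋂ k, X k ⁻¹' Set.Iio ε := by ext; simp
  rw [hsets, measureReal_def, hX.meas_iInter fun k => ⟨_, measurableSet_Iio, rfl⟩,
    ENNReal.toReal_prod]
  refine Finset.prod_congr rfl fun k _ => ?_
  rw [show μ (X k ⁻¹' Set.Iio ε) = _ from
    measure_lt_of_map_eq_expMeasure (hrate k) (hlaw k) hε, ENNReal.toReal_ofReal]
  linarith [exp_le_one_iff.mpr (neg_nonpos.mpr (mul_nonneg (hrate k).le hε))]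

end ProbabilityTheory

lemma half_le_one_sub_exp_neg {x : ℝ} (hx0 : 0 ≤ x) (hx1 : x ≤ 1) : x / 2 ≤ 1 - exp (-x) := by
  have h := add_one_le_exp x
  have hprod : exp (-x) * exp x = 1 := by rw [← exp_add, neg_add_cancel, exp_zero]
  nlinarith [exp_pos (-x)]

/-- `inl ()` is the source–destination link, `inr (inl j)` the link from the source to relay
`j` and `inr (inr j)` the link from relay `j` to the destination. -/
abbrev Link (K : ℕ) := Unit ⊕ (Fin K ⊕ Fin K)

def weakLink {K : ℕ} (f : Fin K → Bool) : Option (Fin K) → Link K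
  | none => .inl ()
  | some j => .inr (if f j then .inl j else .inr j)

lemma weakLink_injective {K : ℕ} (f : Fin K → Bool) : (weakLink f).Injective := by
  rintro (_ | i) (_ | j) h <;> simp only [weakLink, reduceCtorEq, Sum.inr.injEq] at h
  · rfl
  · split_ifs at h <;> simp_all

open scoped Classical in
def Outage {K : ℕ} (g : Link K → ℝ) (s t : ℝ) : Prop :=
  (1 + s * g (.inl ())) *
    (1 + s * ∑ j ∈ univ.filter (fun j => 1 + s * g (.inr (.inl j)) ≥ t),
      g (.inr (.inr j))) < t

namespace Outage

variable {K : ℕ} {g : Link K → ℝ} {s t : ℝ}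

lemma exists_weakLink_lt (hg : ∀ i, 0 ≤ g i) (hs : 0 < s) (h : Outage g s t) :
    ∃ f, ∀ k, g (weakLink f k) < (t - 1) / s := by
  classical
  set D := univ.filter (fun j => 1 + s * g (.inr (.inl j)) ≥ t)
  have hSD1 : 1 ≤ 1 + s * g (.inl ()) := by nlinarith [hg (.inl ())]
  have hRD1 : 1 ≤ 1 + s * ∑ j ∈ D, g (.inr (.inr j)) := by
    nlinarith [sum_nonneg fun j (_ : j ∈ D) => hg (.inr (.inr j))]
  have hSD : 1 + s * g (.inl ()) < t := (le_mul_of_one_le_right (by linarith) hRD1).trans_lt h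
  have hRD : 1 + s * ∑ j ∈ D, g (.inr (.inr j)) < t :=
    (le_mul_of_one_le_left (by linarith) hSD1).trans_lt h
  refine ⟨fun j => decide (1 + s * g (.inr (.inl j)) < t), ?_⟩
  rintro (_ | j)
  · rw [lt_div_iff₀ hs]; simp only [weakLink]; linarith
  · rw [lt_div_iff₀ hs]
    by_cases hj : 1 + s * g (.inr (.inl j)) < t
    · simp only [weakLink, hj, decide_true, if_true]; linarith
    · simp only [weakLink, hj, decide_false, Bool.false_eq_true, if_false]
      have hjD : j ∈ D := mem_filter.mpr ⟨mem_univ j, not_lt.mp hj⟩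
      have := single_le_sum (fun i _ => hg (.inr (.inr i))) hjD
      nlinarith

lemma of_weakLink_lt (hs : 0 < s) (h : ∀ k, g (weakLink (fun _ => true) k) < (t - 1) / s) :
    Outage g s t := by
  classical
  have hD : univ.filter (fun j => 1 + s * g (.inr (.inl j)) ≥ t) = ∅ := by
    refine filter_eq_empty_iff.mpr fun j _ => not_le.mpr ?_
    have := (lt_div_iff₀ hs).mp (h (some j))
    simp only [weakLink, if_true] at this
    linarith
  have := (lt_div_iff₀ hs).mp (h none)
  simp only [weakLink] at this
  unfold Outage
  rw [hD, sum_empty]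
  linarith

end Outage

section OutageProbability

variable {Ω : Type*} [MeasurableSpace Ω] {μ : Measure Ω} [IsProbabilityMeasure μ] {K : ℕ}
  {G : Link K → Ω → ℝ} {rate : Link K → ℝ}

lemma measureReal_outage_le (hG : iIndepFun G μ) (hrate : ∀ i, 0 < rate i)
    (hlaw : ∀ i, μ.map (G i) = expMeasure (rate i)) {s t : ℝ} (hs : 0 < s) (ht : 1 ≤ t) :
    μ.real {ω | Outage (G · ω) s t} ≤
      (∑ f : Fin K → Bool, ∏ k, rate (weakLink f k)) * ((t - 1) / s) ^ (K + 1) := by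
  set ε := (t - 1) / s
  have hε : 0 ≤ ε := div_nonneg (by linarith) hs.le
  have hneg : μ.real {ω | ∃ i, G i ω < 0} = 0 := by
    rw [Set.ofPred_exists, measureReal_eq_zero_iff]
    refine measure_iUnion_null fun i => ?_
    simpa using measure_lt_of_map_eq_expMeasure (hrate i) (hlaw i) le_rfl
  have hsub : {ω | Outage (G · ω) s t} ⊆
      {ω | ∃ i, G i ω < 0} ∪ ⋃ f, {ω | ∀ k, G (weakLink f k) ω < ε} := by
    intro ω h
    by_cases hω : ∃ i, G i ω < 0
    · exact .inl hω
    · push Not at hω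
      exact .inr (Set.mem_iUnion.mpr (h.exists_weakLink_lt hω hs))
  have hpath : ∀ f, μ.real {ω | ∀ k, G (weakLink f k) ω < ε} ≤
      (∏ k, rate (weakLink f k)) * ε ^ (K + 1) := fun f => by
    rw [(hG.precomp (weakLink_injective f)).measureReal_forall_lt_eq_prod (fun _ => hrate _)
      (fun _ => hlaw _) hε]
    calc ∏ k, (1 - exp (-(rate (weakLink f k) * ε)))
        ≤ ∏ k, rate (weakLink f k) * ε :=
          prod_le_prod (fun k _ => sub_nonneg.mpr (exp_le_one_iff.mpr
            (neg_nonpos.mpr (mul_nonneg (hrate _).le hε))))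
            fun k _ => by linarith [one_sub_le_exp_neg (rate (weakLink f k) * ε)]
      _ = (∏ k, rate (weakLink f k)) * ε ^ (K + 1) := by
          rw [← prod_mul_pow_card, card_univ, Fintype.card_option, Fintype.card_fin]
  calc μ.real {ω | Outage (G · ω) s t}
      ≤ μ.real {ω | ∃ i, G i ω < 0} +
          μ.real (⋃ f, {ω | ∀ k, G (weakLink f k) ω < ε}) :=
        (measureReal_mono hsub).trans (measureReal_union_le _ _)
    _ ≤ ∑ f, μ.real {ω | ∀ k, G (weakLink f k) ω < ε} := by
        rw [hneg, zero_add]; exact measureReal_iUnion_fintype_le _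
    _ ≤ ∑ f, (∏ k, rate (weakLink f k)) * ε ^ (K + 1) := sum_le_sum fun f _ => hpath f
    _ = (∑ f : Fin K → Bool, ∏ k, rate (weakLink f k)) * ε ^ (K + 1) := (sum_mul ..).symm

lemma le_measureReal_outage (hG : iIndepFun G μ) (hrate : ∀ i, 0 < rate i)
    (hlaw : ∀ i, μ.map (G i) = expMeasure (rate i)) {s t : ℝ} (hs : 0 < s) (ht : 1 ≤ t)
    (hsmall : ∀ i, rate i * ((t - 1) / s) ≤ 1) :
    (∏ k, rate (weakLink (fun _ => true) k) / 2) * ((t - 1) / s) ^ (K + 1) ≤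
      μ.real {ω | Outage (G · ω) s t} := by
  set ε := (t - 1) / s
  have hε : 0 ≤ ε := div_nonneg (by linarith) hs.le
  set path := weakLink (K := K) fun _ => true
  calc (∏ k, rate (path k) / 2) * ε ^ (K + 1)
      = ∏ k, rate (path k) * ε / 2 := by
        rw [show K + 1 = #(univ : Finset (Option (Fin K))) by simp, prod_mul_pow_card]
        exact prod_congr rfl fun k _ => by ring
    _ ≤ ∏ k, (1 - exp (-(rate (path k) * ε))) :=
        prod_le_prod (fun k _ => by have := hrate (path k); positivity)
          fun k _ => half_le_one_sub_exp_neg (mul_nonneg (hrate _).le hε) (hsmall _)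
    _ = μ.real {ω | ∀ k, G (path k) ω < ε} :=
        ((hG.precomp (weakLink_injective _)).measureReal_forall_lt_eq_prod (fun _ => hrate _)
          (fun _ => hlaw _) hε).symm
    _ ≤ μ.real {ω | Outage (G · ω) s t} :=
        measureReal_mono fun ω h => Outage.of_weakLink_lt (g := (G · ω)) hs h

lemma isTheta_measureReal_outage (hG : iIndepFun G μ) (hrate : ∀ i, 0 < rate i)
    (hlaw : ∀ i, μ.map (G i) = expMeasure (rate i)) {t : ℝ → ℝ}
    (ht : ∀ᶠ s in atTop, 1 ≤ t s)
    (hε : Tendsto (fun s => (t s - 1) / s) atTop (𝓝 0)) :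
    (fun s => μ.real {ω | Outage (G · ω) s (t s)}) =Θ[atTop]
      fun s => ((t s - 1) / s) ^ (K + 1) := by
  set c := ∏ k, rate (weakLink (fun _ => true) k) / 2
  have hc : 0 < c := prod_pos fun k _ => half_pos (hrate _)
  have hsmall : ∀ᶠ s in atTop, ∀ i, rate i * ((t s - 1) / s) ≤ 1 :=
    eventually_all.mpr fun i => ((by simpa using hε.const_mul (rate i) :
      Tendsto (fun s => rate i * ((t s - 1) / s)) atTop (𝓝 0)).eventually_lt_const
        one_pos).mono fun _ => le_of_lt
  set C := ∑ f : Fin K → Bool, ∏ k, rate (weakLink f k)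
  refine ⟨.of_bound C ?_, .of_bound c⁻¹ ?_⟩
  · filter_upwards [ht, eventually_gt_atTop 0] with s ht hs
    have hε0 : 0 ≤ (t s - 1) / s := div_nonneg (by linarith) hs.le
    rw [norm_of_nonneg measureReal_nonneg, norm_of_nonneg (pow_nonneg hε0 _)]
    exact measureReal_outage_le hG hrate hlaw hs ht
  · filter_upwards [ht, eventually_gt_atTop 0, hsmall] with s ht hs hsmall
    have hε0 : 0 ≤ (t s - 1) / s := div_nonneg (by linarith) hs.le
    rw [norm_of_nonneg measureReal_nonneg, norm_of_nonneg (pow_nonneg hε0 _),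
      le_inv_mul_iff₀ hc]
    exact le_measureReal_outage hG hrate hlaw hs ht hsmall

end OutageProbability

lemma isTheta_one_add_rpow_sub_one_div {a : ℝ} (ha0 : 0 < a) (ha1 : a ≤ 1) :
    (fun s : ℝ => ((1 + s) ^ a - 1) / s) =Θ[atTop] fun s => s ^ (a - 1) := by
  have hupper : ∀ s : ℝ, 1 ≤ s → (1 + s) ^ a - 1 ≤ 2 * s ^ a := fun s hs => by
    have h2 : (2 : ℝ) ^ a ≤ 2 := by
      simpa using rpow_le_rpow_of_exponent_le (by norm_num : (1 : ℝ) ≤ 2) ha1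
    calc (1 + s) ^ a - 1 ≤ (2 * s) ^ a := by
          linarith [rpow_le_rpow (by linarith) (by linarith : 1 + s ≤ 2 * s) ha0.le]
      _ = 2 ^ a * s ^ a := mul_rpow (by norm_num) (by linarith)
      _ ≤ 2 * s ^ a := by gcongr
  have hlower : ∀ s : ℝ, 0 ≤ s → 2 ≤ s ^ a → s ^ a / 2 ≤ (1 + s) ^ a - 1 :=
    fun s hs _ => by linarith [rpow_le_rpow hs (by linarith : s ≤ 1 + s) ha0.le]
  have hnonneg : ∀ s : ℝ, 0 ≤ s → 0 ≤ ((1 + s) ^ a - 1) / s := fun s hs =>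
    div_nonneg (by linarith [one_le_rpow (by linarith : 1 ≤ 1 + s) ha0.le]) hs
  refine ⟨.of_bound 2 ?_, .of_bound 2 ?_⟩
  · filter_upwards [eventually_ge_atTop 1] with s hs
    have hs0 : 0 < s := by linarith
    rw [norm_of_nonneg (hnonneg s hs0.le), norm_of_nonneg (by positivity), rpow_sub_one hs0.ne',
      ← mul_div_assoc]
    exact div_le_div_of_nonneg_right (hupper s hs) hs0.le
  · filter_upwards [eventually_ge_atTop 1, (tendsto_rpow_atTop ha0).eventually_ge_atTop 2]
      with s hs h2
    have hs0 : 0 < s := by linarith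
    rw [norm_of_nonneg (hnonneg s hs0.le), norm_of_nonneg (by positivity), rpow_sub_one hs0.ne',
      ← mul_div_assoc, div_le_div_iff_of_pos_right hs0]
    linarith [hlower s hs0.le h2]

lemma tendsto_neg_log_div_log_of_isTheta {f : ℝ → ℝ} {A : ℝ}
    (h : f =Θ[atTop] fun s => s ^ (-A)) :
    Tendsto (fun s => -log (f s) / log s) atTop (𝓝 A) := by
  obtain ⟨c₂, hc₂, hf⟩ := h.isBigO.exists_pos
  obtain ⟨c, hc, hg⟩ := h.symm.isBigO.exists_pos
  have hlog : ∀ {c s : ℝ}, 0 < c → 0 < s → log (c * s ^ (-A)) = log c - A * log s :=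
    fun hc hs => by rw [log_mul hc.ne' (rpow_pos_of_pos hs _).ne', log_rpow hs]; ring
  have hlim : ∀ c : ℝ, Tendsto (fun s => A - log c / log s) atTop (𝓝 A) := fun c => by
    simpa using tendsto_const_nhds.sub (tendsto_const_nhds.div_atTop tendsto_log_atTop)
  have hbounds : ∀ᶠ s in atTop, 0 < log s ∧
      log c⁻¹ - A * log s ≤ log |f s| ∧ log |f s| ≤ log c₂ - A * log s := by
    filter_upwards [hf.bound, hg.bound, eventually_gt_atTop 1] with s hupper hlower hs
    have hs0 : 0 < s := by linarith
    have hA : 0 < s ^ (-A) := rpow_pos_of_pos hs0 _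
    rw [norm_of_nonneg hA.le, norm_eq_abs] at hupper hlower
    have hlower' : c⁻¹ * s ^ (-A) ≤ |f s| := by rwa [inv_mul_le_iff₀ hc]
    have hpos : 0 < |f s| := lt_of_lt_of_le (by positivity) hlower'
    refine ⟨log_pos hs, ?_, ?_⟩
    · rw [← hlog (inv_pos.mpr hc) hs0]; exact log_le_log (by positivity) hlower'
    · rw [← hlog hc₂ hs0]; exact log_le_log hpos hupper
  have hdiv : ∀ {c s : ℝ}, 0 < log s → A - log c / log s = (A * log s - log c) / log s :=
    fun hs => by field_simp
  refine tendsto_of_tendsto_of_tendsto_of_le_of_le' (hlim c₂) (hlim c⁻¹) ?_ ?_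
  · filter_upwards [hbounds] with s hb
    obtain ⟨hs, -, hle⟩ := hb
    rw [hdiv hs, ← log_abs (f s)]
    exact div_le_div_of_nonneg_right (by linarith) hs.le
  · filter_upwards [hbounds] with s hb
    obtain ⟨hs, hle, -⟩ := hb
    rw [hdiv hs, ← log_abs (f s)]
    exact div_le_div_of_nonneg_right (by linarith) hs.le

open scoped Classical in
theorem stmt_0_general
    {Ω : Type*} [MeasurableSpace Ω] (μ : Measure Ω) [IsProbabilityMeasure μ]
    (K : ℕ)
    (GSD : Ω → ℝ) (GSR GRD : Fin K → Ω → ℝ)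
    (lamSD : ℝ) (lamSR lamRD : Fin K → ℝ)
    (hlamSD : 0 < lamSD) (hlamSR : ∀ j, 0 < lamSR j) (hlamRD : ∀ j, 0 < lamRD j)
    (hindep : iIndepFun
      (Sum.elim (fun _ : Unit => GSD) (Sum.elim GSR GRD)) μ)
    (hlawSD : μ.map GSD = expMeasure lamSD)
    (hlawSR : ∀ j, μ.map (GSR j) = expMeasure (lamSR j))
    (hlawRD : ∀ j, μ.map (GRD j) = expMeasure (lamRD j))
    (r : ℝ) (hr : r ∈ Set.Ioo (0:ℝ) (1/2))
    (P : ℝ → ℝ)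
    (hP : ∀ s : ℝ, P s = (μ {ω |
        (1 + s * GSD ω) *
          (1 + s * ∑ j ∈ Finset.univ.filter
            (fun j => (1:ℝ) + s * GSR j ω ≥ (1+s) ^ (2*r)), GRD j ω)
          < (1+s) ^ (2*r)}).toReal) :
    Tendsto (fun s : ℝ => -Real.log (P s) / Real.log s) atTop
      (nhds (((K : ℝ) + 1) * (1 - 2*r))) := by
  obtain ⟨hr0, hr1⟩ := hr
  set G : Link K → Ω → ℝ := Sum.elim (fun _ => GSD) (Sum.elim GSR GRD)
  set rate : Link K → ℝ := Sum.elim (fun _ => lamSD) (Sum.elim lamSR lamRD)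
  have hrate : ∀ i, 0 < rate i := by rintro (_ | j | j) <;> simp [rate, *]
  have hlaw : ∀ i, μ.map (G i) = expMeasure (rate i) := by
    rintro (_ | j | j) <;> simp [G, rate, *]
  have hP' : P = fun s => μ.real {ω | Outage (G · ω) s ((1 + s) ^ (2 * r))} := funext hP
  have hε : (fun s : ℝ => ((1 + s) ^ (2 * r) - 1) / s) =Θ[atTop] fun s => s ^ (2 * r - 1) :=
    isTheta_one_add_rpow_sub_one_div (by linarith) (by linarith)
  have hε0 : Tendsto (fun s : ℝ => ((1 + s) ^ (2 * r) - 1) / s) atTop (𝓝 0) :=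
    hε.isBigO.trans_tendsto (by simpa using tendsto_rpow_neg_atTop (y := 1 - 2 * r) (by linarith))
  have ht : ∀ᶠ s : ℝ in atTop, 1 ≤ (1 + s) ^ (2 * r) :=
    (eventually_ge_atTop 0).mono fun s hs => one_le_rpow (by linarith) (by linarith)
  have hpow : (fun s : ℝ => (s ^ (2 * r - 1)) ^ (K + 1)) =ᶠ[atTop]
      fun s => s ^ (-(((K : ℝ) + 1) * (1 - 2 * r))) := by
    filter_upwards [eventually_gt_atTop 0] with s hs
    rw [← rpow_natCast, ← rpow_mul hs.le]
    push_cast; ring_nf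
  rw [hP']
  exact tendsto_neg_log_div_log_of_isTheta <|
    ((isTheta_measureReal_outage hindep hrate hlaw ht hε0).trans
      (hε.pow (K + 1))).trans_eventuallyEq hpow

open scoped Classical in
theorem stmt_0
    {Ω : Type*} [MeasurableSpace Ω] (μ : Measure Ω) [IsProbabilityMeasure μ]
    (K : ℕ) (hK : 1 ≤ K)
    (GSD : Ω → ℝ) (GSR GRD : Fin K → Ω → ℝ)
    (lamSD : ℝ) (lamSR lamRD : Fin K → ℝ)
    (hlamSD : 0 < lamSD) (hlamSR : ∀ j, 0 < lamSR j) (hlamRD : ∀ j, 0 < lamRD j)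
    (hmeasSD : Measurable GSD) (hmeasSR : ∀ j, Measurable (GSR j))
    (hmeasRD : ∀ j, Measurable (GRD j))
    (hindep : iIndepFun
      (Sum.elim (fun _ : Unit => GSD) (Sum.elim GSR GRD)) μ)
    (hlawSD : μ.map GSD = expMeasure lamSD)
    (hlawSR : ∀ j, μ.map (GSR j) = expMeasure (lamSR j))
    (hlawRD : ∀ j, μ.map (GRD j) = expMeasure (lamRD j))
    (r : ℝ) (hr : r ∈ Set.Ioo (0:ℝ) (1/2))
    (P : ℝ → ℝ)
    (hP : ∀ s : ℝ, P s = (μ {ω |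
        (1 + s * GSD ω) *
          (1 + s * ∑ j ∈ Finset.univ.filter
            (fun j => (1:ℝ) + s * GSR j ω ≥ (1+s) ^ (2*r)), GRD j ω)
          < (1+s) ^ (2*r)}).toReal) :
    Tendsto (fun s : ℝ => -Real.log (P s) / Real.log s) atTop
      (nhds (((K : ℝ) + 1) * (1 - 2*r))) :=
  stmt_0_general μ K GSD GSR GRD lamSD lamSR lamRD hlamSD hlamSR hlamRD hindep hlawSD hlawSR hlawRD
    r hr P hP
end

section
/- Fix r ∈ (0, 1/2) and let à = {(β₁, β₂) ∈ ℝ² : β₁ ≥ 0, β₂ ≥ 0, max(1−β₁, 0) + max(1−β₂, 0) < 2r}. Then as s → ∞, the integral ∬_{Ã} (ln s)² · s^{−β₁−β₂} dβ₁ dβ₂ is asymptotically equivalent to (2r·ln s)·s^{−(2−2r)}, i.e. the ratio of the integral to (2r·ln s)·s^{−(2−2r)} tends to 1. -/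
/-!
Write `c = 1 - 2r` and `L = ln s`. Since `0 < c`, the region `Ã` is the quadrant
`{β₁ > c, β₂ > c}` cut by the half-plane `β₁ + β₂ > 2 - 2r`, and the integrand is
`L² e^{-L(β₁+β₂)}`. Integrating over `β₂` and then over `β₁` gives, for `s > 1`, the exact value
`(2rL + 1) s^{-(2-2r)}`, whose second summand is negligible against the first as `L → ∞`.
-/

open MeasureTheory Filter Asymptotics Real Set

theorem integral_exp_neg_mul_Ioi {L : ℝ} (hL : 0 < L) (c : ℝ) :
    ∫ x in Ioi c, exp (-L * x) = exp (-L * c) / L := by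
  rw [integral_exp_mul_Ioi (neg_lt_zero.mpr hL), neg_div_neg_eq]

theorem integral_exp_neg_mul_max_Ioi {L a b : ℝ} (hL : 0 < L) (hab : a ≤ b) :
    ∫ x in Ioi a, exp (-L * max x b) = (b - a + 1 / L) * exp (-L * b) := by
  have htail : IntegrableOn (fun x => exp (-L * max x b)) (Ioi b) :=
    (integrableOn_exp_mul_Ioi (neg_lt_zero.mpr hL) b).congr_fun
      (fun x hx => by rw [max_eq_left (le_of_lt hx)]) measurableSet_Ioi
  rw [← Ioc_union_Ioi_eq_Ioi hab, setIntegral_union (Ioc_disjoint_Ioi le_rfl) measurableSet_Ioi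
    (by fun_prop : Continuous fun x => exp (-L * max x b)).integrableOn_Ioc htail,
    setIntegral_congr_fun measurableSet_Ioc (g := fun _ => exp (-L * b))
      (fun x hx => by rw [max_eq_right hx.2]),
    setIntegral_congr_fun measurableSet_Ioi (g := fun x => exp (-L * x))
      (fun x hx => by rw [max_eq_left (le_of_lt hx)]),
    setIntegral_const, integral_exp_neg_mul_Ioi hL, Real.volume_real_Ioc_of_le hab, smul_eq_mul]
  ring

theorem setIntegral_above_graph {E : Type*} [NormedAddCommGroup E] [NormedSpace ℝ E]
    {f : ℝ × ℝ → E} {s : Set ℝ} {g : ℝ → ℝ} (hs : MeasurableSet s) (hg : Measurable g)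
    (hf : IntegrableOn f {p | p.1 ∈ s ∧ g p.1 < p.2}) :
    ∫ p in {p | p.1 ∈ s ∧ g p.1 < p.2}, f p = ∫ x in s, ∫ y in Ioi (g x), f (x, y) := by
  have hm : MeasurableSet {p : ℝ × ℝ | p.1 ∈ s ∧ g p.1 < p.2} :=
    (measurable_fst hs).inter (measurableSet_lt (hg.comp measurable_fst) measurable_snd)
  rw [← integral_indicator hm, Measure.volume_eq_prod, integral_prod _ (hf.integrable_indicator hm),
    ← integral_indicator hs]
  congr 1 with x
  by_cases hx : x ∈ s
  · rw [indicator_of_mem hx, ← integral_indicator measurableSet_Ioi]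
    congr 1 with y
    simp [indicator, hx]
  · simp [indicator, hx]

theorem setIntegral_exp_neg_mul_add_of_lt_add {L c d : ℝ} (hL : 0 < L) (hcd : 2 * c ≤ d) :
    ∫ p in {p : ℝ × ℝ | c < p.1 ∧ c < p.2 ∧ d < p.1 + p.2}, exp (-L * (p.1 + p.2))
      = (d - 2 * c + 1 / L) * exp (-L * d) / L := by
  have hregion : {p : ℝ × ℝ | c < p.1 ∧ c < p.2 ∧ d < p.1 + p.2}
      = {p | p.1 ∈ Ioi c ∧ max c (d - p.1) < p.2} := by
    ext p
    simp only [mem_ofPred_eq, mem_Ioi, max_lt_iff]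
    constructor <;> rintro ⟨h1, h2, h3⟩ <;> exact ⟨h1, h2, by linarith⟩
  have hexp : IntegrableOn (fun x => exp (-L * x)) (Ioi c) :=
    integrableOn_exp_mul_Ioi (neg_lt_zero.mpr hL) c
  have hquadrant : IntegrableOn (fun p : ℝ × ℝ => exp (-L * (p.1 + p.2))) (Ioi c ×ˢ Ioi c) := by
    rw [IntegrableOn, Measure.volume_eq_prod, ← Measure.prod_restrict]
    simpa only [mul_add, exp_add] using hexp.mul_prod hexp
  have hinner : ∀ x, ∫ y in Ioi (max c (d - x)), exp (-L * (x + y))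
      = exp (-L * c) * exp (-L * max x (d - c)) / L := by
    intro x
    have hmax : x + max c (d - x) = c + max x (d - c) := by
      rw [← max_add_add_left, ← max_add_add_left]; congr 1 <;> ring
    simp only [mul_add, exp_add]
    rw [integral_const_mul, integral_exp_neg_mul_Ioi hL, mul_div_assoc', ← exp_add, ← exp_add,
      ← mul_add, ← mul_add, hmax]
  rw [hregion, setIntegral_above_graph (g := fun x => max c (d - x)) measurableSet_Ioi
      (by fun_prop) (hquadrant.mono_set fun p hp => ⟨hp.1, (le_max_left _ _).trans_lt hp.2⟩)]
  simp only [hinner]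
  rw [integral_div, integral_const_mul, integral_exp_neg_mul_max_Ioi hL (by linarith),
    mul_left_comm, ← exp_add]
  ring_nf

theorem outage_region_eq {r : ℝ} (hr0 : 0 < r) (hr1 : 2 * r ≤ 1) :
    {p : ℝ × ℝ | 0 ≤ p.1 ∧ 0 ≤ p.2 ∧ max (1 - p.1) 0 + max (1 - p.2) 0 < 2 * r}
      = {p | 1 - 2 * r < p.1 ∧ 1 - 2 * r < p.2 ∧ 2 - 2 * r < p.1 + p.2} := by
  ext ⟨x, y⟩
  simp only [mem_ofPred_eq]
  constructor
  · rintro ⟨-, -, h⟩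
    have := le_max_left (1 - x) 0
    have := le_max_right (1 - x) 0
    have := le_max_left (1 - y) 0
    have := le_max_right (1 - y) 0
    exact ⟨by linarith, by linarith, by linarith⟩
  · rintro ⟨hx, hy, hxy⟩
    refine ⟨by linarith, by linarith, ?_⟩
    rcases max_cases (1 - x) 0 with ⟨ex, -⟩ | ⟨ex, -⟩ <;>
      rcases max_cases (1 - y) 0 with ⟨ey, -⟩ | ⟨ey, -⟩ <;> rw [ex, ey] <;> linarith

theorem integral_outage_region {r s : ℝ} (hr : r ∈ Ioo (0 : ℝ) (1 / 2)) (hs : 1 < s) :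
    ∫ β in {p : ℝ × ℝ | 0 ≤ p.1 ∧ 0 ≤ p.2 ∧ max (1 - p.1) 0 + max (1 - p.2) 0 < 2 * r},
        log s ^ 2 * s ^ (-(β.1 + β.2))
      = (2 * r * log s + 1) * s ^ (-(2 - 2 * r)) := by
  have hL : 0 < log s := log_pos hs
  simp only [rpow_def_of_pos (by linarith : 0 < s), mul_neg, ← neg_mul]
  rw [outage_region_eq hr.1 (by linarith [hr.2]), integral_const_mul,
    setIntegral_exp_neg_mul_add_of_lt_add hL (by linarith [hr.1])]
  field_simp
  ring

/-- asymptotic equivalence of the normalized outage integral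
`∬_Ã (ln s)² s^{-β₁-β₂} dβ₁ dβ₂ ~ (2r ln s) s^{-(2-2r)}` as `s → ∞`. -/
theorem stmt_2 (r : ℝ) (hr : r ∈ Set.Ioo (0:ℝ) (1/2)) :
    (fun s : ℝ => ∫ β in {p : ℝ × ℝ | 0 ≤ p.1 ∧ 0 ≤ p.2 ∧
        max (1 - p.1) 0 + max (1 - p.2) 0 < 2*r},
        (Real.log s)^2 * s ^ (-(β.1 + β.2)))
      ~[atTop] (fun s : ℝ => (2*r*Real.log s) * s ^ (-(2-2*r))) := by
  refine IsEquivalent.congr_left (u := fun s => (2 * r * log s + 1) * s ^ (-(2 - 2 * r))) ?_ ?_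
  · have hlog : Tendsto (fun s => 2 * r * log s) atTop atTop :=
      tendsto_log_atTop.const_mul_atTop (by linarith [hr.1])
    have hsmall : (fun s : ℝ => s ^ (-(2 - 2 * r))) =o[atTop]
        (fun s => 2 * r * log s * s ^ (-(2 - 2 * r))) := by
      simpa using ((isLittleO_one_left_iff ℝ).mpr (tendsto_norm_atTop_atTop.comp hlog)).mul_isBigO
        (isBigO_refl (fun s : ℝ => s ^ (-(2 - 2 * r))) atTop)
    simpa only [add_mul, one_mul, Pi.add_def] using IsEquivalent.refl.add_isLittleO hsmall
  · filter_upwards [eventually_gt_atTop 1] with s hs using (integral_outage_region hr hs).symm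
end

section
/- Let G_{S,D}, G_{S,R_1}, G_{S,R_2}, G_{R_1,D} be independent random variables, each exponentially distributed with rates λ_{S,D}, λ_{S,R_1}, λ_{S,R_2}, λ_{R_1,D} > 0 respectively, and fix r ∈ (0, 1/2). Then as s → ∞, Pr[{1+sG_{S,R_1} ≥ (1+s)^{2r}} ∩ {1+sG_{S,R_2} < (1+s)^{2r}} ∩ {(1+sG_{S,D})·(1+sG_{R_1,D}) < (1+s)^{2r}}] is asymptotically equivalent to λ_{S,R_2}·λ_{S,D}·λ_{R_1,D}·(2r·ln s)·s^{−(3−4r)}. -/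
/-!
Put `T = (1 + s)^(2r)` and `t = (T - 1)/s`, so that `t ~ s^(2r - 1) → 0`. By independence the
event splits as `{G_{S,R₁} ≥ t}`, `{G_{S,R₂} < t}` and the outage of the two-branch channel, with
probabilities `e^{-λ_{S,R₁} t} → 1`, `1 - e^{-λ_{S,R₂} t} ~ λ_{S,R₂} t`, and
`∫₀ᵗ λ_{S,D} e^{-λ_{S,D} x} (1 - e^{-λ_{R₁,D} c(x)}) dx`, where `c(x) = (T/(1 + s x) - 1)/s` is the
outage threshold for `G_{R₁,D}` given `G_{S,D} = x`. On `[0, t]` both `x` and `c(x)` lie in `[0, t]`,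
so the integrand is `λ_{S,D} λ_{R₁,D} c(x)` up to a factor between `e^{-(λ_{S,D} + λ_{R₁,D}) t}`
and `1`; and `∫₀ᵗ c = (T log T - (T - 1))/s² ~ 2r log s · s^(2r - 2)`.
-/

open MeasureTheory ProbabilityTheory Filter Asymptotics Real Set
open scoped ENNReal Topology

namespace ProbabilityTheory

instance nullSingletonClass_expMeasure (r : ℝ) : NullSingletonClass (expMeasure r) :=
  inferInstanceAs (NullSingletonClass (volume.withDensity _))

lemma expMeasure_Iio {r : ℝ} (hr : 0 < r) (x : ℝ) :
    expMeasure r (Iio x) = ENNReal.ofReal (1 - exp (-(r * x))) := by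
  have := isProbabilityMeasure_expMeasure hr
  rw [measure_congr Iio_ae_eq_Iic, ← ofReal_cdf, cdf_expMeasure_eq hr]
  split_ifs with hx
  · rfl
  · rw [ENNReal.ofReal_zero, eq_comm, ENNReal.ofReal_eq_zero, sub_nonpos, one_le_exp_iff]
    nlinarith

lemma expMeasure_real_Iio {r : ℝ} (hr : 0 < r) {x : ℝ} (hx : 0 ≤ x) :
    (expMeasure r).real (Iio x) = 1 - exp (-(r * x)) := by
  rw [measureReal_def, expMeasure_Iio hr, ENNReal.toReal_ofReal]
  rw [sub_nonneg, exp_le_one_iff, neg_nonpos]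
  positivity

lemma expMeasure_real_Ici {r : ℝ} (hr : 0 < r) {x : ℝ} (hx : 0 ≤ x) :
    (expMeasure r).real (Ici x) = exp (-(r * x)) := by
  have := isProbabilityMeasure_expMeasure hr
  rw [← compl_Iio, measureReal_compl measurableSet_Iio, expMeasure_real_Iio hr hx, probReal_univ]
  ring

lemma iIndepFun.map_prodMk_prodMk_eq {Ω ι β : Type*} [MeasurableSpace Ω] [MeasurableSpace β]
    {μ : Measure Ω} [IsProbabilityMeasure μ] {f : ι → Ω → β} (hf : ∀ i, Measurable (f i))
    (h : iIndepFun f μ) {i j k l : ι} (hij : i ≠ j) (hik : i ≠ k) (hil : i ≠ l) (hjk : j ≠ k)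
    (hjl : j ≠ l) (hkl : k ≠ l) :
    μ.map (fun ω ↦ ((f i ω, f j ω), (f k ω, f l ω)))
      = ((μ.map (f i)).prod (μ.map (f j))).prod ((μ.map (f k)).prod (μ.map (f l))) := by
  have hpair (a b : ι) (hab : a ≠ b) :
      μ.map (fun ω ↦ (f a ω, f b ω)) = (μ.map (f a)).prod (μ.map (f b)) :=
    (indepFun_iff_map_prod_eq_prod_map_map (hf a).aemeasurable (hf b).aemeasurable).1
      (h.indepFun hab)
  rw [← hpair i j hij, ← hpair k l hkl]
  exact (indepFun_iff_map_prod_eq_prod_map_map ((hf i).prodMk (hf j)).aemeasurable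
    ((hf k).prodMk (hf l)).aemeasurable).1 (h.indepFun_prodMk_prodMk hf i j k l hik hil hjk hjl)

end ProbabilityTheory

lemma Real.mul_exp_neg_le_one_sub_exp_neg (v : ℝ) : v * exp (-v) ≤ 1 - exp (-v) := by
  have h := add_one_le_exp v
  have : exp v * exp (-v) = 1 := by rw [← exp_add, add_neg_cancel, exp_zero]
  nlinarith [exp_pos (-v)]

noncomputable def outageThreshold (s T x : ℝ) : ℝ := (T / (1 + s * x) - 1) / s

section outageThreshold

variable {s T x : ℝ}

lemma lt_outageThreshold_iff (hs : 0 < s) (hx : 0 ≤ x) (y : ℝ) :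
    y < outageThreshold s T x ↔ (1 + s * x) * (1 + s * y) < T := by
  have h1sx : 0 < 1 + s * x := by positivity
  rw [outageThreshold, lt_div_iff₀ hs, lt_sub_iff_add_lt, lt_div_iff₀ h1sx, add_comm, mul_comm,
    mul_comm y s]

lemma outageThreshold_nonneg (hs : 0 < s) (hx : x ∈ Icc 0 ((T - 1) / s)) :
    0 ≤ outageThreshold s T x := by
  have h1sx : 0 < 1 + s * x := by nlinarith [hx.1]
  have : 1 + s * x ≤ T := by linarith [(le_div_iff₀ hs).1 hx.2]
  exact div_nonneg (sub_nonneg.2 ((one_le_div h1sx).2 this)) hs.le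

lemma outageThreshold_le (hs : 0 < s) (hT : 0 ≤ T) (hx : 0 ≤ x) :
    outageThreshold s T x ≤ (T - 1) / s := by
  have : T / (1 + s * x) ≤ T := div_le_self hT (by nlinarith)
  unfold outageThreshold
  gcongr

lemma outageThreshold_neg (hs : 0 < s) (hT : 1 ≤ T) (hx : (T - 1) / s < x) :
    outageThreshold s T x < 0 := by
  rw [div_lt_iff₀ hs] at hx
  have h1sx : 0 < 1 + s * x := by linarith
  exact div_neg_of_neg_of_pos (sub_neg.2 ((div_lt_one h1sx).2 (by linarith))) hs

lemma continuousOn_outageThreshold (hs : 0 < s) :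
    ContinuousOn (outageThreshold s T) (Ici 0) := by
  unfold outageThreshold
  fun_prop (disch := intro x hx; nlinarith [mem_Ici.1 hx])

lemma integral_outageThreshold (hs : 0 < s) (hT : 1 ≤ T) :
    ∫ x in Icc 0 ((T - 1) / s), outageThreshold s T x
      = (T * Real.log T - (T - 1)) / s ^ 2 := by
  have ht : 0 ≤ (T - 1) / s := div_nonneg (by linarith) hs.le
  have hderiv : ∀ x ∈ Ici (0 : ℝ), HasDerivAt
      (fun y ↦ (T * Real.log (1 + s * y) - s * y) / s ^ 2) (outageThreshold s T x) x := by
    intro x hx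
    have h1sx : 0 < 1 + s * x := by nlinarith [mem_Ici.1 hx]
    refine (((((hasDerivAt_id' x).const_mul s).const_add 1).log h1sx.ne' |>.const_mul T
      |>.sub ((hasDerivAt_id' x).const_mul s)).div_const (s ^ 2)).congr_deriv ?_
    rw [outageThreshold]
    field_simp
  rw [integral_Icc_eq_integral_Ioc, ← intervalIntegral.integral_of_le ht,
    intervalIntegral.integral_eq_sub_of_hasDerivAt
      (fun x hx ↦ hderiv x (by rw [uIcc_of_le ht] at hx; exact hx.1))
      ((continuousOn_outageThreshold hs).mono (by rw [uIcc_of_le ht]; exact Icc_subset_Ici_self)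
        |>.intervalIntegrable)]
  field_simp
  simp

end outageThreshold

section ExponentialOutage

variable {l₀ l₃ s T : ℝ}

lemma expMeasure_prod_real_outage (hl₀ : 0 < l₀) (hl₃ : 0 < l₃) (hs : 0 < s) (hT : 1 ≤ T) :
    ((expMeasure l₀).prod (expMeasure l₃)).real {p | (1 + s * p.1) * (1 + s * p.2) < T}
      = ∫ x in Icc 0 ((T - 1) / s),
          l₀ * exp (-(l₀ * x)) * (1 - exp (-(l₃ * outageThreshold s T x))) := by
  set g : ℝ → ℝ := fun x ↦ l₀ * exp (-(l₀ * x)) * (1 - exp (-(l₃ * outageThreshold s T x)))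
  have hB : MeasurableSet {p : ℝ × ℝ | (1 + s * p.1) * (1 + s * p.2) < T} :=
    measurableSet_lt (by fun_prop) measurable_const
  have hslice (x : ℝ) : exponentialPDF l₀ x * expMeasure l₃ (Prod.mk x ⁻¹'
      {p : ℝ × ℝ | (1 + s * p.1) * (1 + s * p.2) < T}) = (Icc 0 ((T - 1) / s)).indicator
        (fun x ↦ ENNReal.ofReal (g x)) x := by
    rcases lt_or_ge x 0 with hx | hx
    · rw [exponentialPDF_of_neg hx, zero_mul]
      exact (indicator_of_notMem (fun h ↦ hx.not_ge h.1) _).symm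
    have hpre : Prod.mk x ⁻¹' {p : ℝ × ℝ | (1 + s * p.1) * (1 + s * p.2) < T}
        = Iio (outageThreshold s T x) := by
      ext y; exact (lt_outageThreshold_iff hs hx y).symm
    rw [hpre, expMeasure_Iio hl₃, exponentialPDF_of_nonneg hx,
      ← ENNReal.ofReal_mul (by positivity)]
    rcases le_or_gt x ((T - 1) / s) with hxt | hxt
    · rw [indicator_of_mem (show x ∈ Icc 0 ((T - 1) / s) from ⟨hx, hxt⟩)]
    · rw [indicator_of_notMem (fun h ↦ hxt.not_ge (mem_Icc.1 h).2), ENNReal.ofReal_eq_zero]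
      have : 1 ≤ exp (-(l₃ * outageThreshold s T x)) :=
        one_le_exp_iff.2 (by nlinarith [outageThreshold_neg hs hT hxt])
      exact mul_nonpos_of_nonneg_of_nonpos (by positivity) (by linarith)
  have hcont : ContinuousOn g (Ici 0) := by
    have := continuousOn_outageThreshold (T := T) hs
    fun_prop
  have hnonneg : ∀ x ∈ Icc 0 ((T - 1) / s), 0 ≤ g x := by
    intro x hx
    have : exp (-(l₃ * outageThreshold s T x)) ≤ 1 :=
      exp_le_one_iff.2 (by nlinarith [outageThreshold_nonneg hs hx])
    exact mul_nonneg (by positivity) (by linarith)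
  have hint : IntegrableOn g (Icc 0 ((T - 1) / s)) :=
    (hcont.mono Icc_subset_Ici_self).integrableOn_Icc
  have := isProbabilityMeasure_expMeasure hl₃
  have hpdf : Measurable (exponentialPDF l₀) := (measurable_exponentialPDFReal l₀).ennreal_ofReal
  rw [measureReal_def, Measure.prod_apply hB,
    show expMeasure l₀ = volume.withDensity (exponentialPDF l₀) from rfl,
    lintegral_withDensity_eq_lintegral_mul _ hpdf
      (measurable_measure_prodMk_left hB)]
  simp only [Pi.mul_apply, hslice]
  rw [lintegral_indicator measurableSet_Icc, ← ofReal_integral_eq_lintegral_ofReal hint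
    ((ae_restrict_iff' measurableSet_Icc).2 (ae_of_all _ hnonneg)),
    ENNReal.toReal_ofReal (setIntegral_nonneg measurableSet_Icc hnonneg)]

lemma expMeasure_prod_real_outage_bounds (hl₀ : 0 < l₀) (hl₃ : 0 < l₃) (hs : 0 < s)
    (hT : 1 ≤ T) :
    exp (-((l₀ + l₃) * ((T - 1) / s))) * (l₀ * l₃ * ((T * Real.log T - (T - 1)) / s ^ 2))
        ≤ ((expMeasure l₀).prod (expMeasure l₃)).real {p | (1 + s * p.1) * (1 + s * p.2) < T}
      ∧ ((expMeasure l₀).prod (expMeasure l₃)).real {p | (1 + s * p.1) * (1 + s * p.2) < T}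
        ≤ l₀ * l₃ * ((T * Real.log T - (T - 1)) / s ^ 2) := by
  set t := (T - 1) / s
  set g : ℝ → ℝ := fun x ↦ l₀ * exp (-(l₀ * x)) * (1 - exp (-(l₃ * outageThreshold s T x)))
  have hcont : ContinuousOn (outageThreshold s T) (Icc 0 t) :=
    (continuousOn_outageThreshold hs).mono Icc_subset_Ici_self
  have hgint : IntegrableOn g (Icc 0 t) := by
    refine ContinuousOn.integrableOn_Icc ?_
    fun_prop
  have hcint : IntegrableOn (fun x ↦ l₀ * l₃ * outageThreshold s T x) (Icc 0 t) :=
    hcont.integrableOn_Icc.const_mul _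
  have hmain : ∫ x in Icc 0 t, l₀ * l₃ * outageThreshold s T x
      = l₀ * l₃ * ((T * Real.log T - (T - 1)) / s ^ 2) := by
    rw [integral_const_mul, integral_outageThreshold hs hT]
  rw [expMeasure_prod_real_outage hl₀ hl₃ hs hT, ← hmain, ← integral_const_mul]
  constructor
  · refine setIntegral_mono_on (hcint.const_mul _) hgint measurableSet_Icc fun x hx ↦ ?_
    set u := outageThreshold s T x
    have hxt : x ≤ t := hx.2
    have hu₀ : 0 ≤ u := outageThreshold_nonneg hs hx
    have hut : u ≤ t := outageThreshold_le hs (by linarith) hx.1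
    calc exp (-((l₀ + l₃) * t)) * (l₀ * l₃ * u)
        = l₀ * exp (-(l₀ * t)) * (l₃ * u * exp (-(l₃ * t))) := by
          rw [show -((l₀ + l₃) * t) = -(l₀ * t) + -(l₃ * t) by ring, exp_add]; ring
      _ ≤ l₀ * exp (-(l₀ * x)) * (l₃ * u * exp (-(l₃ * u))) := by
          gcongr
      _ ≤ l₀ * exp (-(l₀ * x)) * (1 - exp (-(l₃ * u))) := by
          gcongr
          exact mul_exp_neg_le_one_sub_exp_neg (l₃ * u)
  · refine setIntegral_mono_on hgint hcint measurableSet_Icc fun x hx ↦ ?_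
    set u := outageThreshold s T x
    have hu : 0 ≤ u := outageThreshold_nonneg hs hx
    calc l₀ * exp (-(l₀ * x)) * (1 - exp (-(l₃ * u)))
        ≤ l₀ * 1 * (l₃ * u) := by
          have := hx.1
          gcongr
          · exact sub_nonneg.2 (exp_le_one_iff.2 (by nlinarith))
          · exact exp_le_one_iff.2 (by nlinarith)
          · linarith [one_sub_le_exp_neg (l₃ * u)]
      _ = l₀ * l₃ * u := by ring

end ExponentialOutage

namespace Asymptotics

lemma isEquivalent_one_sub_exp_neg : (fun v : ℝ ↦ 1 - exp (-v)) ~[𝓝 0] id := by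
  have h : HasDerivAt (fun v : ℝ ↦ 1 - exp (-v)) 1 0 := by
    simpa using ((hasDerivAt_neg' 0).exp).const_sub 1
  simpa using! h.isLittleO

lemma isEquivalent_of_mul_le_of_le {α : Type*} {l : Filter α} {f g k : α → ℝ}
    (hk : Tendsto k l (𝓝 1)) (hlow : ∀ᶠ x in l, k x * g x ≤ f x) (hup : ∀ᶠ x in l, f x ≤ g x)
    (hg : ∀ᶠ x in l, 0 < g x) : f ~[l] g := by
  refine isEquivalent_of_tendsto_one (tendsto_of_tendsto_of_tendsto_of_le_of_le' hk
    tendsto_const_nhds ?_ ?_)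
  · filter_upwards [hlow, hg] with x hx hgx
    rwa [Pi.div_apply, le_div_iff₀ hgx]
  · filter_upwards [hup, hg] with x hx hgx
    rwa [Pi.div_apply, div_le_one hgx]

lemma isEquivalent_mul_log_sub_sub_one {α : Type*} {l : Filter α} {u : α → ℝ}
    (hu : Tendsto u l atTop) :
    (fun x ↦ u x * Real.log (u x) - (u x - 1)) ~[l] fun x ↦ u x * Real.log (u x) := by
  have hnorm : Tendsto (norm ∘ u) l atTop := tendsto_norm_atTop_atTop.comp hu
  have hsub : (fun x ↦ u x - 1) ~[l] u :=
    IsEquivalent.refl.sub_isLittleO (isLittleO_const_left.2 (Or.inr hnorm))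
  have hlog : (fun _ ↦ (1 : ℝ)) =o[l] fun x ↦ Real.log (u x) :=
    isLittleO_const_left.2 (Or.inr (tendsto_norm_atTop_atTop.comp (tendsto_log_atTop.comp hu)))
  refine IsEquivalent.refl.sub_isLittleO (hsub.isBigO.trans_isLittleO ?_)
  simpa using (isBigO_refl u l).mul_isLittleO hlog

lemma isEquivalent_one_add_rpow (ρ : ℝ) :
    (fun s : ℝ ↦ (1 + s) ^ ρ) ~[atTop] fun s ↦ s ^ ρ := by
  have hmax : (max · 0) =ᶠ[atTop] fun s : ℝ ↦ s :=
    (eventually_ge_atTop 0).mono fun s hs ↦ max_eq_left hs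
  have h : (fun s : ℝ ↦ 1 + s) ~[atTop] (max · 0) :=
    (IsEquivalent.refl.const_add_of_norm_tendsto_atTop
      (tendsto_norm_atTop_atTop.comp tendsto_id)).congr_right hmax.symm
  exact (h.rpow (fun s ↦ le_max_right s 0)).congr_right (hmax.fun_comp (· ^ ρ))

lemma isEquivalent_one_add_rpow_sub_one_div {ρ : ℝ} (hρ : 0 < ρ) :
    (fun s : ℝ ↦ ((1 + s) ^ ρ - 1) / s) ~[atTop] fun s ↦ s ^ (ρ - 1) := by
  have hone : (fun _ ↦ (1 : ℝ)) =o[atTop] fun s : ℝ ↦ s ^ ρ :=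
    isLittleO_const_left.2 (Or.inr (tendsto_norm_atTop_atTop.comp (tendsto_rpow_atTop hρ)))
  refine (((isEquivalent_one_add_rpow ρ).sub_isLittleO hone).div
    (IsEquivalent.refl (u := fun s : ℝ ↦ s))).congr_right ?_
  filter_upwards [eventually_gt_atTop 0] with s hs
  rw [Pi.div_apply, rpow_sub_one hs.ne']

lemma tendsto_one_add_rpow_sub_one_div {ρ : ℝ} (hρ₀ : 0 < ρ) (hρ₁ : ρ < 1) :
    Tendsto (fun s : ℝ ↦ ((1 + s) ^ ρ - 1) / s) atTop (𝓝 0) := by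
  refine (isEquivalent_one_add_rpow_sub_one_div hρ₀).symm.tendsto_nhds ?_
  simpa using tendsto_rpow_neg_atTop (y := 1 - ρ) (by linarith)

end Asymptotics

lemma measureReal_relay_outage {Ω : Type*} [MeasurableSpace Ω] {μ : Measure Ω}
    [IsProbabilityMeasure μ] {G : Fin 4 → Ω → ℝ} (hmeas : ∀ i, Measurable (G i))
    (hindep : iIndepFun G μ) {s : ℝ} (hs : 0 < s) (T : ℝ) :
    μ.real ({ω | 1 + s * G 1 ω ≥ T} ∩ {ω | 1 + s * G 2 ω < T}
        ∩ {ω | (1 + s * G 0 ω) * (1 + s * G 3 ω) < T})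
      = (μ.map (G 1)).real (Ici ((T - 1) / s)) * (μ.map (G 2)).real (Iio ((T - 1) / s))
        * ((μ.map (G 0)).prod (μ.map (G 3))).real {p | (1 + s * p.1) * (1 + s * p.2) < T} := by
  have hB : MeasurableSet {p : ℝ × ℝ | (1 + s * p.1) * (1 + s * p.2) < T} :=
    measurableSet_lt (by fun_prop) measurable_const
  have hevent : {ω | 1 + s * G 1 ω ≥ T} ∩ {ω | 1 + s * G 2 ω < T}
        ∩ {ω | (1 + s * G 0 ω) * (1 + s * G 3 ω) < T}
      = (fun ω ↦ ((G 1 ω, G 2 ω), (G 0 ω, G 3 ω))) ⁻¹' ((Ici ((T - 1) / s) ×ˢ Iio ((T - 1) / s))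
          ×ˢ {p | (1 + s * p.1) * (1 + s * p.2) < T}) := by
    ext ω
    simp only [mem_inter_iff, mem_ofPred_eq, mem_preimage, mem_prod, mem_Ici, mem_Iio,
      div_le_iff₀ hs, lt_div_iff₀ hs]
    constructor <;> rintro ⟨⟨h₁, h₂⟩, h₃⟩ <;> refine ⟨⟨?_, ?_⟩, h₃⟩ <;> linarith
  rw [hevent, ← map_measureReal_apply (by fun_prop)
      ((measurableSet_Ici.prod measurableSet_Iio).prod hB),
    iIndepFun.map_prodMk_prodMk_eq hmeas hindep (by decide) (by decide) (by decide) (by decide)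
      (by decide) (by decide), measureReal_prod_prod, measureReal_prod_prod]

lemma expMeasure_prod_real_outage_isEquivalent {l₀ l₃ ρ : ℝ} (hl₀ : 0 < l₀) (hl₃ : 0 < l₃)
    (hρ₀ : 0 < ρ) (hρ₁ : ρ < 1) :
    (fun s : ℝ ↦ ((expMeasure l₀).prod (expMeasure l₃)).real
        {p | (1 + s * p.1) * (1 + s * p.2) < (1 + s) ^ ρ})
      ~[atTop] fun s ↦ l₀ * l₃ * (ρ * Real.log s) * s ^ (ρ - 2) := by
  have hT := isEquivalent_one_add_rpow ρ
  have hT₁ {s : ℝ} (hs : 0 < s) : 1 ≤ (1 + s) ^ ρ := one_le_rpow (by linarith) hρ₀.le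
  have hTtop : Tendsto (fun s : ℝ ↦ (1 + s) ^ ρ) atTop atTop :=
    hT.symm.tendsto_atTop (tendsto_rpow_atTop hρ₀)
  have hmain : (fun s : ℝ ↦ l₀ * l₃ * (((1 + s) ^ ρ * Real.log ((1 + s) ^ ρ)
      - ((1 + s) ^ ρ - 1)) / s ^ 2)) ~[atTop] fun s ↦ l₀ * l₃ * (ρ * Real.log s) * s ^ (ρ - 2) := by
    have h := (isEquivalent_mul_log_sub_sub_one hTtop).trans
      (hT.mul (hT.log (tendsto_rpow_atTop hρ₀)))
    refine (IsEquivalent.refl.mul (h.div (IsEquivalent.refl (u := fun s : ℝ ↦ s ^ 2))))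
      |>.congr_right ?_
    filter_upwards [eventually_gt_atTop 0] with s hs
    rw [Pi.mul_apply, Pi.div_apply, Pi.mul_apply, log_rpow hs, rpow_sub hs, rpow_two]
    ring
  refine (isEquivalent_of_mul_le_of_le (k := fun s ↦ exp (-((l₀ + l₃) * (((1 + s) ^ ρ - 1) / s))))
    ?_ ?_ ?_ (hmain.eventually_pos ?_)).trans hmain
  · simpa using ((tendsto_one_add_rpow_sub_one_div hρ₀ hρ₁).const_mul (l₀ + l₃)).neg.rexp
  · filter_upwards [eventually_gt_atTop 0] with s hs
    exact (expMeasure_prod_real_outage_bounds hl₀ hl₃ hs (hT₁ hs)).1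
  · filter_upwards [eventually_gt_atTop 0] with s hs
    exact (expMeasure_prod_real_outage_bounds hl₀ hl₃ hs (hT₁ hs)).2
  · filter_upwards [eventually_gt_atTop 1] with s hs
    have := log_pos hs
    positivity

/-- the probability that exactly relay 1 decodes and the resulting
two-branch channel is in outage is asymptotically
`λ_{S,R₂} λ_{S,D} λ_{R₁,D} (2r ln s) s^{-(3-4r)}` as `s → ∞`. -/
theorem stmt_4
    {Ω : Type*} [MeasurableSpace Ω] (μ : Measure Ω) [IsProbabilityMeasure μ]
    (G : Fin 4 → Ω → ℝ) (lamSD lamSR1 lamSR2 lamRD1 : ℝ)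
    (hlamSD : 0 < lamSD) (hlamSR1 : 0 < lamSR1) (hlamSR2 : 0 < lamSR2)
    (hlamRD1 : 0 < lamRD1)
    (hmeas : ∀ i, Measurable (G i))
    (hindep : iIndepFun G μ)
    (hlaw0 : μ.map (G 0) = expMeasure lamSD)
    (hlaw1 : μ.map (G 1) = expMeasure lamSR1)
    (hlaw2 : μ.map (G 2) = expMeasure lamSR2)
    (hlaw3 : μ.map (G 3) = expMeasure lamRD1)
    (r : ℝ) (hr : r ∈ Set.Ioo (0:ℝ) (1/2)) :
    (fun s : ℝ => (μ ({ω | 1 + s * G 1 ω ≥ (1+s) ^ (2*r)}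
        ∩ {ω | 1 + s * G 2 ω < (1+s) ^ (2*r)}
        ∩ {ω | (1 + s * G 0 ω) * (1 + s * G 3 ω) < (1+s) ^ (2*r)})).toReal)
      ~[atTop]
      (fun s : ℝ => lamSR2 * lamSD * lamRD1 * (2*r*Real.log s) * s ^ (-(3-4*r))) := by
  obtain ⟨hr₀, hr₁⟩ := hr
  have hρ₀ : 0 < 2 * r := by linarith
  have hρ₁ : 2 * r < 1 := by linarith
  set t : ℝ → ℝ := fun s ↦ ((1 + s) ^ (2 * r) - 1) / s
  have ht : Tendsto t atTop (𝓝 0) := tendsto_one_add_rpow_sub_one_div hρ₀ hρ₁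
  have hdecode : (fun s ↦ exp (-(lamSR1 * t s))) ~[atTop] fun _ ↦ (1 : ℝ) :=
    (isEquivalent_const_iff_tendsto one_ne_zero).2 (by simpa using (ht.const_mul lamSR1).neg.rexp)
  have hfail : (fun s ↦ 1 - exp (-(lamSR2 * t s))) ~[atTop] fun s ↦ lamSR2 * s ^ (2 * r - 1) :=
    (isEquivalent_one_sub_exp_neg.comp_tendsto (by simpa using ht.const_mul lamSR2)).trans
      (IsEquivalent.refl.mul (isEquivalent_one_add_rpow_sub_one_div hρ₀))
  refine ((hdecode.mul hfail).mul (expMeasure_prod_real_outage_isEquivalent hlamSD hlamRD1 hρ₀ hρ₁))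
    |>.congr_left ?_ |>.congr_right ?_
  · filter_upwards [eventually_gt_atTop 0] with s hs
    have hT : 1 ≤ (1 + s) ^ (2 * r) := one_le_rpow (by linarith) hρ₀.le
    have ht₀ : 0 ≤ t s := div_nonneg (by linarith) hs.le
    rw [← measureReal_def, measureReal_relay_outage hmeas hindep hs, hlaw0, hlaw1, hlaw2, hlaw3,
      expMeasure_real_Ici hlamSR1 ht₀, expMeasure_real_Iio hlamSR2 ht₀]
    rfl
  · filter_upwards [eventually_gt_atTop 0] with s hs
    simp only [Pi.mul_apply]
    rw [show -(3 - 4 * r) = (2 * r - 1) + (2 * r - 2) by ring, rpow_add hs]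
    ring
end

section
/- Let a₁, a₂ ∈ ℂ, ρ > 0, and let B, T₀ > 0 be reals with B·T₀ ≥ 1. Set Δ₁ = ⌊BT₀⌋/⌈BT₀⌉. Then (1/(4πBT₀))·∫_{−πBT₀}^{πBT₀} ln(1 + ρ·|a₁ + a₂e^{iu}|²) du ≥ (Δ₁/2)·ln((1 + ρ(|a₁|² + |a₂|²))/2). -/
/-!
With `c = 1 + ρ (‖a₁‖² + ‖a₂‖²)` and `a = 2ρ a₁ conj a₂ / c` one has, for `‖z‖ = 1`,
`1 + ρ ‖a₁ + a₂ z‖² = (c/2) ‖z + a‖² + (c/2) (1 - ‖a‖²)`, and `‖a‖ < 1` by AM–GM.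
Dropping the last term and using that the circle average of `log ‖z + a‖` is `log⁺ ‖a‖ ≥ 0`
(Jensen), the circle average of the integrand is at least `log (c/2)`. The integrand is
nonnegative and `2π`-periodic in `u`, so the integral over `[-πBT₀, πBT₀]` is at least the
integral over `⌊BT₀⌋` full periods; it remains to use `⌊BT₀⌋ / BT₀ ≥ ⌊BT₀⌋ / ⌈BT₀⌉`.
-/

open MeasureTheory Real ComplexConjugate

theorem Function.Periodic.floor_smul_integral_le {g : ℝ → ℝ} {T : ℝ}
    (hg : Function.Periodic g T) (hT : 0 < T) (h_int : IntervalIntegrable g volume 0 T)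
    (h_nonneg : ∀ x, 0 ≤ g x)
    {a b : ℝ} (hab : a ≤ b) :
    ⌊(b - a) / T⌋ • ∫ x in 0..T, g x ≤ ∫ x in a..b, g x := by
  set n := ⌊(b - a) / T⌋
  have hn : 0 ≤ n := Int.floor_nonneg.2 (div_nonneg (sub_nonneg.2 hab) hT.le)
  have hnT : (n : ℝ) * T ≤ b - a := (le_div_iff₀ hT).1 (Int.floor_le _)
  have h_int' := hg.intervalIntegrable₀ hT.ne' h_int
  calc n • ∫ x in 0..T, g x = ∫ x in a..a + n • T, g x := by
        rw [hg.intervalIntegral_add_zsmul_eq n a h_int', hg.intervalIntegral_add_eq a 0, zero_add]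
    _ ≤ ∫ x in a..b, g x := by
        refine intervalIntegral.integral_mono_interval le_rfl ?_ (by rw [zsmul_eq_mul]; linarith)
          (Filter.Eventually.of_forall h_nonneg) (h_int' a b)
        rw [zsmul_eq_mul]; nlinarith [(Int.cast_nonneg hn : (0:ℝ) ≤ n)]

theorem norm_lt_one_of_ofReal_mul_eq {ρ c : ℝ} {a a₁ a₂ : ℂ} (hρ : 0 ≤ ρ)
    (hc : c = 1 + ρ * (‖a₁‖ ^ 2 + ‖a₂‖ ^ 2)) (ha : (c : ℂ) * a = 2 * ρ * (a₁ * conj a₂)) :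
    ‖a‖ < 1 := by
  have hc0 : 0 < c := by rw [hc]; positivity
  have hnorm : c * ‖a‖ = 2 * ρ * (‖a₁‖ * ‖a₂‖) := by
    simpa [abs_of_pos hc0, abs_of_nonneg hρ] using congrArg norm ha
  have hamgm : 2 * (‖a₁‖ * ‖a₂‖) ≤ ‖a₁‖ ^ 2 + ‖a₂‖ ^ 2 := by
    nlinarith [sq_nonneg (‖a₁‖ - ‖a₂‖)]
  nlinarith [mul_le_mul_of_nonneg_left hamgm hρ]

theorem one_add_mul_norm_add_mul_sq_eq {ρ c : ℝ} {a a₁ a₂ z : ℂ} (hz : ‖z‖ = 1)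
    (hc : c = 1 + ρ * (‖a₁‖ ^ 2 + ‖a₂‖ ^ 2)) (ha : (c : ℂ) * a = 2 * ρ * (a₁ * conj a₂)) :
    1 + ρ * ‖a₁ + a₂ * z‖ ^ 2 = c / 2 * ‖z + a‖ ^ 2 + c / 2 * (1 - ‖a‖ ^ 2) := by
  have hre := congrArg Complex.re ha
  have him := congrArg Complex.im ha
  simp only [Complex.mul_re, Complex.mul_im, Complex.ofReal_re, Complex.ofReal_im,
    Complex.conj_re, Complex.conj_im, Complex.re_ofNat, Complex.im_ofNat] at hre him
  have hz2 := Complex.sq_norm z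
  rw [hz, Complex.normSq_apply] at hz2
  simp only [Complex.sq_norm, Complex.normSq_apply, Complex.add_re, Complex.add_im,
    Complex.mul_re, Complex.mul_im] at hc ⊢
  subst hc
  linear_combination (-z.re) * hre + (-z.im) * him +
    ((1 + ρ * (a₁.re * a₁.re + a₁.im * a₁.im - (a₂.re * a₂.re + a₂.im * a₂.im))) / 2) * hz2

theorem log_half_add_two_mul_log_norm_le {ρ c : ℝ} {a a₁ a₂ z : ℂ} (hρ : 0 ≤ ρ) (hz : ‖z‖ = 1)
    (hc : c = 1 + ρ * (‖a₁‖ ^ 2 + ‖a₂‖ ^ 2)) (ha : (c : ℂ) * a = 2 * ρ * (a₁ * conj a₂)) :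
    log (c / 2) + 2 * log ‖z + a‖ ≤ log (1 + ρ * ‖a₁ + a₂ * z‖ ^ 2) := by
  have hc0 : 0 < c := by rw [hc]; positivity
  have ha1 := norm_lt_one_of_ofReal_mul_eq hρ hc ha
  have hza : 0 < ‖z + a‖ := by
    have := norm_sub_norm_le z (-a)
    rw [sub_neg_eq_add, norm_neg, hz] at this
    linarith
  calc log (c / 2) + 2 * log ‖z + a‖ = log (c / 2 * ‖z + a‖ ^ 2) := by
        rw [log_mul (by positivity) (by positivity), log_pow]
        push_cast
        ring
    _ ≤ log (1 + ρ * ‖a₁ + a₂ * z‖ ^ 2) := by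
        rw [one_add_mul_norm_add_mul_sq_eq hz hc ha]
        have ha_sq : ‖a‖ ^ 2 ≤ 1 := by nlinarith [norm_nonneg a]
        apply log_le_log (by positivity)
        exact le_add_of_nonneg_right (mul_nonneg (by positivity) (sub_nonneg.2 ha_sq))

theorem log_half_le_circleAverage_log_one_add_mul_norm_sq {ρ : ℝ} (hρ : 0 ≤ ρ) (a₁ a₂ : ℂ) :
    log ((1 + ρ * (‖a₁‖ ^ 2 + ‖a₂‖ ^ 2)) / 2) ≤
      circleAverage (fun z ↦ log (1 + ρ * ‖a₁ + a₂ * z‖ ^ 2)) 0 1 := by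
  set c := 1 + ρ * (‖a₁‖ ^ 2 + ‖a₂‖ ^ 2) with hc
  have hc0 : (c : ℂ) ≠ 0 := by norm_cast; positivity
  set a : ℂ := 2 * ρ * (a₁ * conj a₂) / c
  have ha : (c : ℂ) * a = 2 * ρ * (a₁ * conj a₂) := mul_div_cancel₀ _ hc0
  have h_int : CircleIntegrable (log ‖· + a‖) 0 1 := by
    simpa using circleIntegrable_log_norm_sub_const (a := -a) (c := 0) 1
  have h_int₂ : CircleIntegrable (fun z ↦ 2 * log ‖z + a‖) 0 1 := h_int.const_mul 2
  calc log (c / 2) ≤ log (c / 2) + 2 * circleAverage (log ‖· + a‖) 0 1 := by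
        rw [circleAverage_log_norm_add_const_eq_posLog]
        linarith [posLog_nonneg (x := ‖a‖)]
    _ = circleAverage (fun z ↦ log (c / 2) + 2 * log ‖z + a‖) 0 1 := by
        rw [circleAverage_fun_add (circleIntegrable_const _ _ _) h_int₂,
          circleAverage_const]
        congr 1
        exact (circleAverage_fun_smul (a := (2 : ℝ))).symm
    _ ≤ circleAverage (fun z ↦ log (1 + ρ * ‖a₁ + a₂ * z‖ ^ 2)) 0 1 := by
        refine circleAverage_mono ((circleIntegrable_const _ _ _).add h_int₂) ?_
          fun z hz ↦ ?_
        · refine ContinuousOn.circleIntegrable' (Continuous.continuousOn ?_)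
          exact Continuous.log (by fun_prop) fun z ↦ by positivity
        · exact log_half_add_two_mul_log_norm_le hρ (by simpa using hz) hc ha

theorem integral_log_one_add_mul_norm_sq_ge {ρ L : ℝ} (hρ : 0 ≤ ρ) (hL : 1 ≤ L) (a₁ a₂ : ℂ) :
    (1 / (4 * π * L)) *
        ∫ u in Set.Icc (-(π * L)) (π * L),
          log (1 + ρ * ‖a₁ + a₂ * Complex.exp (u * Complex.I)‖ ^ 2)
      ≥ ((⌊L⌋ : ℝ) / (⌈L⌉ : ℝ)) / 2 * log ((1 + ρ * (‖a₁‖ ^ 2 + ‖a₂‖ ^ 2)) / 2) := by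
  set F : ℂ → ℝ := fun z ↦ log (1 + ρ * ‖a₁ + a₂ * z‖ ^ 2)
  have hF : ∀ z, 0 ≤ F z := fun z ↦ log_nonneg (le_add_of_nonneg_right (by positivity))
  set A := circleAverage F 0 1
  have hA : log ((1 + ρ * (‖a₁‖ ^ 2 + ‖a₂‖ ^ 2)) / 2) ≤ A :=
    log_half_le_circleAverage_log_one_add_mul_norm_sq hρ a₁ a₂
  have hA₀ : 0 ≤ A := circleAverage_nonneg_of_nonneg fun z _ ↦ hF z
  have hcont : Continuous (F ∘ circleMap 0 1) :=
    (Continuous.log (by fun_prop) fun z ↦ by positivity).comp (continuous_circleMap 0 1)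
  have hint : ⌊L⌋ * (2 * π * A) ≤ ∫ u in Set.Icc (-(π * L)) (π * L),
      log (1 + ρ * ‖a₁ + a₂ * Complex.exp (u * Complex.I)‖ ^ 2) := by
    have hπL : 0 < π * L := by positivity
    have h := ((periodic_circleMap 0 1).comp F).floor_smul_integral_le two_pi_pos
      (hcont.intervalIntegrable _ _) (fun _ ↦ hF _) (neg_le_self hπL.le)
    rw [show (π * L - -(π * L)) / (2 * π) = L by field_simp; ring, zsmul_eq_mul,
      intervalIntegral.integral_of_le (neg_le_self hπL.le)] at h
    rw [integral_Icc_eq_integral_Ioc]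
    simp only [A, circleAverage_def, smul_eq_mul, mul_inv_cancel_left₀ two_pi_pos.ne']
    simpa [F, circleMap_zero] using h
  have hL₀ : 0 < L := by linarith
  have hceil : L ≤ ⌈L⌉ := Int.le_ceil L
  have hfloor : (0 : ℝ) ≤ ⌊L⌋ := by exact_mod_cast Int.floor_nonneg.2 hL₀.le
  rw [ge_iff_le]
  calc ((⌊L⌋ : ℝ) / ⌈L⌉) / 2 * log ((1 + ρ * (‖a₁‖ ^ 2 + ‖a₂‖ ^ 2)) / 2)
      ≤ (⌊L⌋ / ⌈L⌉) / 2 * A := by gcongr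
    _ ≤ (⌊L⌋ / L) / 2 * A := by gcongr
    _ = 1 / (4 * π * L) * (⌊L⌋ * (2 * π * A)) := by field_simp; ring
    _ ≤ _ := by gcongr

theorem stmt_10_general (a₁ a₂ : ℂ) (ρ B T₀ : ℝ) (hρ : 0 < ρ)
    (hBT : 1 ≤ B * T₀) :
    (1 / (4 * π * B * T₀)) *
        ∫ u in Set.Icc (-(π * B * T₀)) (π * B * T₀),
          Real.log (1 + ρ * ‖a₁ + a₂ * Complex.exp (u * Complex.I)‖ ^ 2)
      ≥ ((⌊B * T₀⌋ : ℝ) / (⌈B * T₀⌉ : ℝ)) / 2 *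
          Real.log ((1 + ρ * (‖a₁‖ ^ 2 + ‖a₂‖ ^ 2)) / 2) := by
  simpa only [mul_assoc] using integral_log_one_add_mul_norm_sq_ge hρ.le hBT a₁ a₂

/-- lower bound on the mutual information of the equivalent two-path
channel: `(1/(4πBT₀)) ∫_{-πBT₀}^{πBT₀} ln(1 + ρ|a₁+a₂e^{iu}|²) du
  ≥ (Δ₁/2) ln((1+ρ(|a₁|²+|a₂|²))/2)` where `Δ₁ = ⌊BT₀⌋/⌈BT₀⌉`. -/
theorem stmt_10 (a₁ a₂ : ℂ) (ρ B T₀ : ℝ) (hρ : 0 < ρ) (hB : 0 < B) (hT : 0 < T₀)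
    (hBT : 1 ≤ B * T₀) :
    (1 / (4 * π * B * T₀)) *
        ∫ u in Set.Icc (-(π * B * T₀)) (π * B * T₀),
          Real.log (1 + ρ * ‖a₁ + a₂ * Complex.exp (u * Complex.I)‖ ^ 2)
      ≥ ((⌊B * T₀⌋ : ℝ) / (⌈B * T₀⌉ : ℝ)) / 2 *
          Real.log ((1 + ρ * (‖a₁‖ ^ 2 + ‖a₂‖ ^ 2)) / 2) :=
  stmt_10_general a₁ a₂ ρ B T₀ hρ hBT
end

section
/- Let a₁, a₂ ∈ ℂ and ρ > 0. Put ν = |a₁|² + |a₂|² and w = |a₁|² − |a₂|². Then (1/(2π))·∫_{−π}^{π} ln(1 + ρ·|a₁ + a₂e^{iu}|²) du = ln( (1 + ρν + √(1 + ρ²w² + 2ρν)) / 2 ). -/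
/-!
On the unit circle, `1 + ρ‖a₁ + a₂ z‖²` is the positive trigonometric polynomial
`s + 2 Re (b z)` with `s = 1 + ρν` and `b = ρ ā₁ a₂`. It factors as `m ‖1 + (b / m) z‖²`, where
`m = (s + √(s² - 4‖b‖²)) / 2` is the larger root of `m² - s m + ‖b‖² = 0`, and `‖b / m‖ < 1`.
Since `log ‖1 + c z‖` has mean zero on the circle for `‖c‖ ≤ 1` (Jensen), the mean of the
logarithm is `log m`; finally `s² - 4‖b‖² = 1 + ρ²w² + 2ρν`.
-/

open MeasureTheory Real

theorem circleAverage_zero_one_eq_setIntegral_Icc (f : ℂ → ℝ) :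
    circleAverage f 0 1 =
      (1 / (2 * π)) * ∫ u in Set.Icc (-π) π, f (Complex.exp (u * Complex.I)) := by
  rw [circleAverage_eq_integral_add (-π), smul_eq_mul, one_div,
    intervalIntegral.integral_comp_add_right (fun θ ↦ f (circleMap 0 1 θ)), zero_add,
    show 2 * π + -π = π by ring, integral_Icc_eq_integral_Ioc,
    ← intervalIntegral.integral_of_le (by linarith [pi_pos])]
  simp only [circleMap_zero, Complex.ofReal_one, one_mul]

theorem circleAverage_log_norm_one_add_mul {c : ℂ} (hc : ‖c‖ ≤ 1) :
    circleAverage (fun z ↦ log ‖1 + c * z‖) 0 1 = 0 := by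
  have hsphere : Set.EqOn (fun z ↦ log ‖1 + c * z‖) (fun z ↦ log ‖z⁻¹ + c‖)
      (Metric.sphere 0 |1|) := by
    intro z hz
    have hz1 : ‖z‖ = 1 := by simpa using hz
    have hz0 : z ≠ 0 := norm_ne_zero_iff.mp (by rw [hz1]; exact one_ne_zero)
    have : 1 + c * z = z * (z⁻¹ + c) := by field_simp
    simp only [this, norm_mul, hz1, one_mul]
  rw [circleAverage_congr_sphere hsphere,
    circleAverage_zero_one_congr_inv (f := fun z ↦ log ‖z + c‖),
    circleAverage_log_norm_add_const_eq_posLog, posLog_eq_zero_iff]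
  simpa using hc

theorem norm_add_mul_sq_of_norm_eq_one (a₁ a₂ : ℂ) {z : ℂ} (hz : ‖z‖ = 1) :
    ‖a₁ + a₂ * z‖ ^ 2 = ‖a₁‖ ^ 2 + ‖a₂‖ ^ 2 + 2 * ((starRingEnd ℂ) a₁ * a₂ * z).re := by
  rw [Complex.sq_norm, Complex.normSq_add, Complex.normSq_mul, ← Complex.sq_norm z, hz,
    Complex.sq_norm, Complex.sq_norm, ← Complex.conj_re]
  simp only [map_mul, Complex.conj_conj, one_pow, mul_one, mul_assoc]

theorem add_two_re_mul_eq_mul_norm_one_add_div_mul_sq {s m : ℝ} {b z : ℂ} (hm : m ≠ 0)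
    (hroot : m ^ 2 - s * m + ‖b‖ ^ 2 = 0) (hz : ‖z‖ = 1) :
    s + 2 * (b * z).re = m * ‖1 + b / m * z‖ ^ 2 := by
  rw [norm_add_mul_sq_of_norm_eq_one 1 _ hz, map_one, one_mul, norm_one, norm_div,
    Complex.norm_real, norm_eq_abs, div_pow, sq_abs, div_mul_eq_mul_div, Complex.div_ofReal_re]
  field_simp
  linear_combination -hroot

theorem circleAverage_log_add_two_re_mul_eq_log_of_root {s m : ℝ} {b : ℂ} (hbm : ‖b‖ < m)
    (hroot : m ^ 2 - s * m + ‖b‖ ^ 2 = 0) :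
    circleAverage (fun z ↦ log (s + 2 * (b * z).re)) 0 1 = log m := by
  have hm : 0 < m := (norm_nonneg b).trans_lt hbm
  have hc : ‖b / m‖ < 1 := by
    rwa [norm_div, Complex.norm_of_nonneg hm.le, div_lt_one hm]
  have hsphere : Set.EqOn (fun z ↦ log (s + 2 * (b * z).re))
      (fun z ↦ log m + (2 : ℝ) • log ‖1 + b / m * z‖) (Metric.sphere 0 |1|) := by
    intro z hz
    have hz1 : ‖z‖ = 1 := by simpa using hz
    have hne : 0 < ‖1 + b / m * z‖ := by
      have h := norm_sub_norm_le (1 : ℂ) (-(b / m * z))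
      rw [sub_neg_eq_add, norm_one, norm_neg, norm_mul, hz1, mul_one] at h
      linarith
    simp only [add_two_re_mul_eq_mul_norm_one_add_div_mul_sq hm.ne' hroot hz1,
      log_mul hm.ne' (pow_ne_zero 2 hne.ne'), log_pow, Nat.cast_ofNat, smul_eq_mul]
  have hint : CircleIntegrable (fun z ↦ log ‖1 + b / m * z‖) 0 1 :=
    MeromorphicOn.circleIntegrable_log_norm (fun z _ ↦ by fun_prop)
  rw [circleAverage_congr_sphere hsphere,
    circleAverage_fun_add (f₂ := fun z ↦ (2 : ℝ) • log ‖1 + b / m * z‖)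
      (circleIntegrable_const _ _ _) (hint.const_smul (a := (2 : ℝ))),
    circleAverage_const, circleAverage_fun_smul,
    circleAverage_log_norm_one_add_mul hc.le, smul_zero, add_zero]

theorem circleAverage_log_add_two_re_mul {s : ℝ} {b : ℂ} (hb : 2 * ‖b‖ < s) :
    circleAverage (fun z ↦ log (s + 2 * (b * z).re)) 0 1 =
      log ((s + √(s ^ 2 - 4 * ‖b‖ ^ 2)) / 2) := by
  have hD : 0 ≤ s ^ 2 - 4 * ‖b‖ ^ 2 := by nlinarith [norm_nonneg b]
  refine circleAverage_log_add_two_re_mul_eq_log_of_root ?_ ?_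
  · linarith [Real.sqrt_nonneg (s ^ 2 - 4 * ‖b‖ ^ 2)]
  · linear_combination (1 / 4) * Real.sq_sqrt hD

/-- closed form of the per-period average mutual information of the
equivalent two-path channel:
`(1/2π) ∫_{-π}^{π} ln(1 + ρ|a₁+a₂e^{iu}|²) du = ln((1+ρν+√(1+ρ²w²+2ρν))/2)`. -/
theorem stmt_11 (a₁ a₂ : ℂ) (ρ : ℝ) (hρ : 0 < ρ) (ν w : ℝ)
    (hν : ν = ‖a₁‖ ^ 2 + ‖a₂‖ ^ 2)
    (hw : w = ‖a₁‖ ^ 2 - ‖a₂‖ ^ 2) :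
    (1 / (2 * π)) *
        ∫ u in Set.Icc (-π) π,
          Real.log (1 + ρ * ‖a₁ + a₂ * Complex.exp (u * Complex.I)‖ ^ 2)
      = Real.log ((1 + ρ * ν + Real.sqrt (1 + ρ^2 * w^2 + 2 * ρ * ν)) / 2) := by
  set b : ℂ := ρ * (starRingEnd ℂ a₁ * a₂)
  have hb_norm : ‖b‖ = ρ * ‖a₁‖ * ‖a₂‖ := by
    rw [norm_mul, norm_mul, Complex.norm_real, norm_eq_abs, abs_of_pos hρ, Complex.norm_conj,
      mul_assoc]
  have hdisc : (1 + ρ * ν) ^ 2 - 4 * ‖b‖ ^ 2 = 1 + ρ ^ 2 * w ^ 2 + 2 * ρ * ν := by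
    rw [hb_norm, hν, hw]; ring
  have hb : 2 * ‖b‖ < 1 + ρ * ν := by
    have hρν : 0 ≤ ρ * ν := mul_nonneg hρ.le (hν ▸ by positivity)
    refine lt_of_pow_lt_pow_left₀ 2 (by linarith) ?_
    nlinarith [sq_nonneg (ρ * w)]
  have hsphere : Set.EqOn (fun z ↦ log (1 + ρ * ‖a₁ + a₂ * z‖ ^ 2))
      (fun z ↦ log (1 + ρ * ν + 2 * (b * z).re)) (Metric.sphere 0 |1|) := by
    intro z hz
    have hz1 : ‖z‖ = 1 := by simpa using hz
    simp only [norm_add_mul_sq_of_norm_eq_one a₁ a₂ hz1, b, mul_assoc, Complex.re_ofReal_mul, hν]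
    congr 1
    ring
  rw [← circleAverage_zero_one_eq_setIntegral_Icc (fun z ↦ log (1 + ρ * ‖a₁ + a₂ * z‖ ^ 2)),
    circleAverage_congr_sphere hsphere, circleAverage_log_add_two_re_mul hb, hdisc]
end

section
/- Let α₁, α₂ ∈ ℂ, ρ > 0, and let p, q ∈ ℝ satisfy |p| + |q| ≤ 1. Set a = ρ·(|α₁|² + |α₂|² + 2p·Re(α₁·conj(α₂))) and b = 2qρ·|α₁|·|α₂|. Then: (i) a ≥ |b|; (ii) (1/(2π))·∫_{−π}^{π} ln[ 1 + ρ(|α₁|² + |α₂|²) + 2ρ·Re(α₁·conj(α₂)·(p + q·e^{−iω})) ] dω = ln( (1 + a + √((1+a)² − b²)) / 2 ); (iii) consequently ln(1+a) − ln 2 ≤ (1/(2π))·∫_{−π}^{π} ln[ 1 + ρ(|α₁|² + |α₂|²) + 2ρ·Re(α₁·conj(α₂)·(p + q·e^{−iω})) ] dω ≤ ln(1+a). -/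
open MeasureTheory Real

lemma stmt12_slit_mem (u : ℝ) (v : ℂ) (hv : ‖v‖ < u) {z : ℂ}
    (hz1 : ‖z‖ ≤ 1) : (u:ℂ) + v * z ∈ Complex.slitPlane := by
  refine Complex.mem_slitPlane_iff.2 (Or.inl ?_)
  have h3 : |(v * z).re| ≤ ‖v‖ := by
    refine le_trans (Complex.abs_re_le_norm _) ?_
    rw [norm_mul]
    calc ‖v‖ * ‖z‖ ≤ ‖v‖ * 1 :=
      mul_le_mul_of_nonneg_left hz1 (norm_nonneg v)
    _ = ‖v‖ := mul_one _
  have he : ((u:ℂ) + v * z).re = u + (v * z).re := by simp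
  rw [he]
  have := abs_le.1 h3
  linarith

lemma stmt12_key_integral (u : ℝ) (v : ℂ) (hv : ‖v‖ < u) :
    ∫ θ in (0:ℝ)..(2*π), Real.log (‖(u:ℂ) + v * Complex.exp (θ * Complex.I)‖)
      = 2 * π * Real.log u := by
  have hu : 0 < u := lt_of_le_of_lt (norm_nonneg v) hv
  set f : ℂ → ℂ := fun z => Complex.log ((u:ℂ) + v * z) with hf
  have hdiff : DifferentiableOn ℂ f (Metric.closedBall 0 1) := by
    intro z hz
    have hz1 : ‖z‖ ≤ 1 := by simpa [Complex.dist_eq] using hz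
    exact ((Complex.differentiableAt_log (stmt12_slit_mem u v hv hz1)).comp z
      (by fun_prop : DifferentiableAt ℂ (fun z : ℂ => (u:ℂ) + v * z) z)).differentiableWithinAt
  have hcauchy := hdiff.circleIntegral_sub_inv_smul (w := 0) (Metric.mem_ball_self one_pos)
  have hcont : Continuous fun θ : ℝ => f (Complex.exp (θ * Complex.I)) := by
    refine continuous_iff_continuousAt.2 fun θ => ?_
    have h2 : Continuous fun θ : ℝ => (u:ℂ) + v * Complex.exp (θ * Complex.I) := by fun_prop
    exact ContinuousAt.comp (g := Complex.log)
      (f := fun θ : ℝ => (u:ℂ) + v * Complex.exp (θ * Complex.I)) (x := θ)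
      (Complex.differentiableAt_log (stmt12_slit_mem u v hv
        (le_of_eq (Complex.norm_exp_ofReal_mul_I θ)))).continuousAt h2.continuousAt
  have h2 : (∮ z in C((0:ℂ), 1), (z - 0)⁻¹ • f z)
      = ∫ θ in (0:ℝ)..(2*π), Complex.I * f (Complex.exp (θ * Complex.I)) := by
    rw [circleIntegral]
    refine intervalIntegral.integral_congr fun θ _ => ?_
    have hcm : circleMap 0 1 θ = Complex.exp (θ * Complex.I) := by
      simp [circleMap]
    have hne : Complex.exp (θ * Complex.I) ≠ 0 := Complex.exp_ne_zero _
    rw [deriv_circleMap, hcm, sub_zero, smul_eq_mul, smul_eq_mul]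
    field_simp
  rw [h2] at hcauchy
  rw [intervalIntegral.integral_const_mul] at hcauchy
  have hI : (Complex.I : ℂ) ≠ 0 := Complex.I_ne_zero
  have hf0 : f 0 = (Real.log u : ℂ) := by
    simp only [hf, mul_zero, add_zero]
    rw [Complex.ofReal_log hu.le]
  have hint : (∫ θ in (0:ℝ)..(2*π), f (Complex.exp (θ * Complex.I)))
      = 2 * π * (Real.log u : ℂ) := by
    have := hcauchy
    rw [hf0, smul_eq_mul] at this
    apply mul_left_cancel₀ hI
    rw [this]; ring
  have hre : ∫ θ in (0:ℝ)..(2*π), (f (Complex.exp (θ * Complex.I))).re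
      = ((∫ θ in (0:ℝ)..(2*π), f (Complex.exp (θ * Complex.I)))).re :=
    Complex.reCLM.intervalIntegral_comp_comm (hcont.intervalIntegrable _ _)
  have hlog : ∀ θ : ℝ, (f (Complex.exp (θ * Complex.I))).re
      = Real.log (‖(u:ℂ) + v * Complex.exp (θ * Complex.I)‖) := fun θ =>
    Complex.log_re _
  calc ∫ θ in (0:ℝ)..(2*π), Real.log (‖(u:ℂ) + v * Complex.exp (θ * Complex.I)‖)
      = ∫ θ in (0:ℝ)..(2*π), (f (Complex.exp (θ * Complex.I))).re := by
        refine intervalIntegral.integral_congr fun θ _ => (hlog θ).symm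
    _ = ((∫ θ in (0:ℝ)..(2*π), f (Complex.exp (θ * Complex.I)))).re := hre
    _ = 2 * π * Real.log u := by rw [hint]; simp

set_option maxHeartbeats 1000000 in
/-- with waveform correlation coefficients `p, q` satisfying
`|p|+|q| ≤ 1`, setting `a = ρ(|α₁|²+|α₂|²+2p·Re(α₁ conj α₂))` and `b = 2qρ|α₁||α₂|`,
one has (i) `a ≥ |b|`, (ii) a closed form for the mutual information integral, and
(iii) the resulting two-sided bounds. -/
theorem stmt_12 (α₁ α₂ : ℂ) (ρ p q : ℝ) (hρ : 0 < ρ) (hpq : |p| + |q| ≤ 1)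
    (a b : ℝ)
    (ha : a = ρ * (‖α₁‖ ^ 2 + ‖α₂‖ ^ 2
        + 2 * p * (α₁ * (starRingEnd ℂ) α₂).re))
    (hb : b = 2 * q * ρ * ‖α₁‖ * ‖α₂‖) :
    |b| ≤ a ∧
    (1 / (2 * π)) *
        (∫ ω in Set.Icc (-π) π,
          Real.log (1 + ρ * (‖α₁‖ ^ 2 + ‖α₂‖ ^ 2)
            + 2 * ρ * (α₁ * (starRingEnd ℂ) α₂
                * ((p : ℂ) + (q : ℂ) * Complex.exp (-(ω * Complex.I)))).re))
      = Real.log ((1 + a + Real.sqrt ((1 + a)^2 - b^2)) / 2) ∧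
    Real.log (1 + a) - Real.log 2 ≤
      (1 / (2 * π)) *
        (∫ ω in Set.Icc (-π) π,
          Real.log (1 + ρ * (‖α₁‖ ^ 2 + ‖α₂‖ ^ 2)
            + 2 * ρ * (α₁ * (starRingEnd ℂ) α₂
                * ((p : ℂ) + (q : ℂ) * Complex.exp (-(ω * Complex.I)))).re)) ∧
    (1 / (2 * π)) *
        (∫ ω in Set.Icc (-π) π,
          Real.log (1 + ρ * (‖α₁‖ ^ 2 + ‖α₂‖ ^ 2)
            + 2 * ρ * (α₁ * (starRingEnd ℂ) α₂
                * ((p : ℂ) + (q : ℂ) * Complex.exp (-(ω * Complex.I)))).re))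
      ≤ Real.log (1 + a) := by
  set A1 := ‖α₁‖ with hA1def
  set A2 := ‖α₂‖ with hA2def
  set c := α₁ * (starRingEnd ℂ) α₂ with hc
  clear_value A1 A2 c
  have hA1 : 0 ≤ A1 := by rw [hA1def]; exact norm_nonneg _
  have hA2 : 0 ≤ A2 := by rw [hA2def]; exact norm_nonneg _
  have habsc : ‖c‖ = A1 * A2 := by
    rw [hc, norm_mul, Complex.norm_conj, ← hA1def, ← hA2def]
  -- part (i)
  have hba : |b| ≤ a := by
    have hrec : |c.re| ≤ A1 * A2 := habsc ▸ Complex.abs_re_le_norm c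
    have hp1 : -( |p| * (A1*A2)) ≤ p * c.re := by
      have h := neg_abs_le (p * c.re)
      have : |p * c.re| ≤ |p| * (A1*A2) := by
        rw [abs_mul]
        exact mul_le_mul_of_nonneg_left hrec (abs_nonneg p)
      linarith
    have hbabs : |b| = 2 * |q| * ρ * A1 * A2 := by
      rw [hb, abs_mul, abs_mul, abs_mul, abs_mul,
        abs_of_nonneg hA1, abs_of_nonneg hA2, abs_of_pos hρ]
      norm_num
    have key : 2 * |q| * A1 * A2 ≤ A1^2 + A2^2 + 2 * (p * c.re) := by
      nlinarith [sq_nonneg (A1 - A2), hp1,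
        mul_nonneg (mul_nonneg hA1 hA2) (by linarith : (0:ℝ) ≤ 1 - |p| - |q|)]
    rw [hbabs, ha]
    nlinarith [mul_le_mul_of_nonneg_left key hρ.le]
  -- setup for the integral
  set C := 1 + a with hC
  clear_value C
  have hb0 : 0 ≤ |b| := abs_nonneg b
  have hCpos : 0 < C := by rw [hC]; linarith
  have hbC : |b| < C := by rw [hC]; linarith
  have hb2C : b^2 ≤ C^2 := by nlinarith [sq_abs b]
  obtain ⟨s, hsdef⟩ : ∃ s, s = Real.sqrt (C^2 - b^2) := ⟨_, rfl⟩
  have hs2 : s^2 = C^2 - b^2 := by rw [hsdef]; exact Real.sq_sqrt (by linarith)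
  have hs0 : 0 ≤ s := by rw [hsdef]; exact Real.sqrt_nonneg _
  rw [← hsdef]
  have hsC : s ≤ C := by nlinarith [sq_abs b]
  obtain ⟨u, hudef⟩ : ∃ u, u = Real.sqrt ((C + s)/2) := ⟨_, rfl⟩
  have hu2 : u^2 = (C + s)/2 := by rw [hudef]; exact Real.sq_sqrt (by linarith)
  have hu0 : 0 < u := by rw [hudef]; exact Real.sqrt_pos.2 (by linarith)
  obtain ⟨w, hw⟩ : ∃ w : ℂ, w = ((2*ρ*q : ℝ) : ℂ) * c := ⟨_, rfl⟩
  have hwabs : ‖w‖ = |b| := by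
    rw [hw, norm_mul, Complex.norm_real, Real.norm_eq_abs, habsc, hb, abs_mul, abs_mul, abs_mul,
      abs_mul, abs_mul, abs_two, abs_of_pos hρ, abs_of_nonneg hA1, abs_of_nonneg hA2,
      abs_mul, abs_two]
    ring
  obtain ⟨v, hv⟩ : ∃ v : ℂ, v = (starRingEnd ℂ) w / ((2*u : ℝ) : ℂ) := ⟨_, rfl⟩
  have h2u : ((2*u : ℝ) : ℂ) ≠ 0 := by
    simp only [ne_eq, Complex.ofReal_eq_zero]; positivity
  have hvabs : ‖v‖ = |b| / (2*u) := by
    rw [hv, norm_div, Complex.norm_conj, hwabs, Complex.norm_real, Real.norm_eq_abs,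
      abs_of_pos (by positivity : (0:ℝ) < 2*u)]
  have hvu : ‖v‖ < u := by
    rw [hvabs, div_lt_iff₀ (by positivity : (0:ℝ) < 2*u)]
    nlinarith
  have huv : ((2*u : ℝ) : ℂ) * v = (starRingEnd ℂ) w := by
    rw [hv, ← mul_div_assoc, mul_comm, mul_div_assoc, div_self h2u, mul_one]
  have hv2 : (‖v‖)^2 = b^2 / (2*(C+s)) := by
    rw [hvabs, div_pow, sq_abs, mul_pow]
    rw [show ((2:ℝ)^2 * u^2) = 2*(C+s) by rw [hu2]; ring]
  have hsum : u^2 + (‖v‖)^2 = C := by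
    have hb2 : b^2 = (C - s) * (C + s) := by nlinarith [hs2]
    have h1 : C + s ≠ 0 := by positivity
    rw [hu2, hv2, hb2]
    field_simp
    ring
  -- pointwise identity
  have hpoint : ∀ ω : ℝ,
      1 + ρ * (A1 ^ 2 + A2 ^ 2)
        + 2 * ρ * (c * ((p : ℂ) + (q : ℂ) * Complex.exp (-(ω * Complex.I)))).re
      = (‖(u:ℂ) + v * Complex.exp ((ω:ℂ) * Complex.I)‖)^2 := by
    intro ω
    obtain ⟨E, hE⟩ : ∃ E, E = Complex.exp (-(ω * Complex.I)) := ⟨_, rfl⟩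
    obtain ⟨e, he⟩ : ∃ e, e = Complex.exp ((ω:ℂ) * Complex.I) := ⟨_, rfl⟩
    rw [← hE, ← he]
    have habse : ‖e‖ = 1 := by rw [he]; exact Complex.norm_exp_ofReal_mul_I ω
    have hcE : c * ((p : ℂ) + (q : ℂ) * E) = (p:ℂ)*c + (q:ℂ)*(c*E) := by ring
    have hwE : (w * E).re = 2*ρ*q * (c*E).re := by
      rw [hw, mul_assoc, Complex.re_ofReal_mul]
    have hLHS : 1 + ρ * (A1 ^ 2 + A2 ^ 2) + 2 * ρ * (c * ((p : ℂ) + (q : ℂ) * E)).re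
        = C + (w * E).re := by
      rw [hcE, Complex.add_re, Complex.re_ofReal_mul, Complex.re_ofReal_mul, hwE, hC, ha]
      ring
    have hconjE : (starRingEnd ℂ) E = e := by
      rw [hE, he, ← Complex.exp_conj]
      congr 1
      simp
    have h1 : ((2*u:ℝ):ℂ) * (v * e) = (starRingEnd ℂ) (w * E) := by
      rw [← mul_assoc, huv, map_mul, hconjE]
    have hwe : (w * E).re = 2*u*(v*e).re := by
      rw [← Complex.re_ofReal_mul, h1, Complex.conj_re]
    have hRHS : (‖(u:ℂ) + v * e‖)^2
        = u^2 + (‖v‖)^2 + 2*u*(v*e).re := by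
      rw [Complex.sq_norm, Complex.normSq_add]
      rw [Complex.normSq_ofReal, Complex.normSq_eq_norm_sq, norm_mul, habse, mul_one]
      have : (((u:ℝ):ℂ) * (starRingEnd ℂ) (v * e)).re = u * (v*e).re := by
        rw [Complex.re_ofReal_mul, Complex.conj_re]
      rw [this, sq]
      ring
    rw [hLHS, hRHS, hsum, hwe]
  -- the integral
  obtain ⟨G, hG⟩ : ∃ G : ℝ → ℝ, G = fun ω : ℝ =>
      Real.log (1 + ρ * (A1 ^ 2 + A2 ^ 2)
        + 2 * ρ * (c * ((p : ℂ) + (q : ℂ) * Complex.exp (-(ω * Complex.I)))).re) := ⟨_, rfl⟩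
  have hGeq : ∀ ω : ℝ, G ω
      = 2 * Real.log (‖(u:ℂ) + v * Complex.exp ((ω:ℂ) * Complex.I)‖) := by
    intro ω
    rw [hG]
    simp only
    rw [hpoint ω, Real.log_pow]
    norm_num
  have hper : Function.Periodic G (2*π) := by
    intro ω
    rw [hG]
    simp only
    congr 3
    have hexp1 : Complex.exp (-(2*(π:ℂ)*Complex.I)) = 1 := by
      rw [show -(2*(π:ℂ)*Complex.I) = ((-1 : ℤ) : ℂ) * (2*(π:ℂ)*Complex.I) by push_cast; ring]
      exact Complex.exp_int_mul_two_pi_mul_I (-1)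
    rw [show -((↑(ω + 2*π):ℂ) * Complex.I) = -(↑ω * Complex.I) + -(2*↑π*Complex.I) by
      push_cast; ring]
    rw [Complex.exp_add, hexp1, mul_one]
  have hInt : (∫ ω in Set.Icc (-π) π, G ω) = 4 * π * Real.log u := by
    rw [integral_Icc_eq_integral_Ioc,
      ← intervalIntegral.integral_of_le (by linarith [Real.pi_pos] : -π ≤ π)]
    calc (∫ ω in (-π)..π, G ω) = ∫ ω in (-π)..(-π + 2*π), G ω := by
          rw [show -π + 2*π = π by ring]
      _ = ∫ ω in (0:ℝ)..(0 + 2*π), G ω := hper.intervalIntegral_add_eq (-π) 0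
      _ = ∫ ω in (0:ℝ)..(2*π), G ω := by rw [zero_add]
      _ = ∫ ω in (0:ℝ)..(2*π),
            2 * Real.log (‖(u:ℂ) + v * Complex.exp ((ω:ℂ) * Complex.I)‖) :=
          intervalIntegral.integral_congr fun ω _ => hGeq ω
      _ = 2 * ∫ ω in (0:ℝ)..(2*π),
            Real.log (‖(u:ℂ) + v * Complex.exp ((ω:ℂ) * Complex.I)‖) :=
          intervalIntegral.integral_const_mul _ _
      _ = 2 * (2 * π * Real.log u) := by rw [stmt12_key_integral u v hvu]
      _ = 4 * π * Real.log u := by ring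
  have hGmatch : (∫ ω in Set.Icc (-π) π,
      Real.log (1 + ρ * (A1 ^ 2 + A2 ^ 2)
        + 2 * ρ * (c * ((p : ℂ) + (q : ℂ) * Complex.exp (-(ω * Complex.I)))).re))
      = ∫ ω in Set.Icc (-π) π, G ω := by rw [hG]
  have hπ : (π:ℝ) ≠ 0 := Real.pi_ne_zero
  have hval : (1 / (2 * π)) * (∫ ω in Set.Icc (-π) π,
      Real.log (1 + ρ * (A1 ^ 2 + A2 ^ 2)
        + 2 * ρ * (c * ((p : ℂ) + (q : ℂ) * Complex.exp (-(ω * Complex.I)))).re))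
      = Real.log ((C + s) / 2) := by
    rw [hGmatch, hInt]
    have h1 : 1 / (2 * π) * (4 * π * Real.log u) = 2 * Real.log u := by
      field_simp
      ring
    rw [h1, show (2:ℝ) * Real.log u = Real.log (u^2) by
      rw [Real.log_pow]; norm_num, hu2]
  refine ⟨hba, hval, ?_, ?_⟩
  · rw [hval]
    have h1 : Real.log C - Real.log 2 = Real.log (C / 2) :=
      (Real.log_div (ne_of_gt hCpos) two_ne_zero).symm
    rw [hC] at h1 ⊢
    rw [← hC] at h1 ⊢
    rw [h1]
    exact Real.log_le_log (by positivity) (by linarith)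
  · rw [hval]
    exact le_trans (Real.log_le_log (by positivity) (by linarith : (C + s)/2 ≤ C))
      (le_of_eq (by rw [hC]))
end

section
/- Let T > 0, let s : ℝ → ℝ be square-integrable with s = 0 almost everywhere outside [0, T] and ∫_ℝ s(t)² dt = 1, and let τ ∈ (0, T]. Then |∫_ℝ s(t)·s(t−τ) dt| + |∫_ℝ s(t)·s(t+T−τ) dt| ≤ 1. -/
/-!
On `[0, T]` the delayed copies `f t = s (t - τ)` and `g t = s (t + T - τ)` live on `[τ, T]`
and `[0, τ]`, so `f g = 0` almost everywhere, and together they form a cyclic rotation of `s` on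
`[0, T]`, again of unit energy. Hence `|s f| + |s g| ≤ (s² + f² + g²) / 2` almost everywhere, and
integrating over `[0, T]` bounds the two correlations by `(1 + 1) / 2`.
-/

open MeasureTheory Set

lemma abs_mul_add_abs_mul_le (a b c : ℝ) :
    |a * b| + |a * c| ≤ (a ^ 2 + b ^ 2 + c ^ 2) / 2 + |b * c| := by
  simp only [abs_mul]
  nlinarith [sq_nonneg (|a| - |b| - |c|), sq_abs a, sq_abs b, sq_abs c]

lemma abs_integral_mul_add_abs_integral_mul_le {α : Type*} [MeasurableSpace α] {μ : Measure α}
    {s f g : α → ℝ} (hs : MemLp s 2 μ) (hf : MemLp f 2 μ) (hg : MemLp g 2 μ)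
    (hfg : ∀ᵐ x ∂μ, f x * g x = 0) :
    |∫ x, s x * f x ∂μ| + |∫ x, s x * g x ∂μ| ≤
      ((∫ x, s x ^ 2 ∂μ) + (∫ x, f x ^ 2 ∂μ) + ∫ x, g x ^ 2 ∂μ) / 2 := by
  have hsf : Integrable (fun x => s x * f x) μ := hs.integrable_mul hf
  have hsg : Integrable (fun x => s x * g x) μ := hs.integrable_mul hg
  have hsq : Integrable (fun x => (s x ^ 2 + f x ^ 2 + g x ^ 2) / 2) μ :=
    ((hs.integrable_sq.add hf.integrable_sq).add hg.integrable_sq).div_const 2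
  calc |∫ x, s x * f x ∂μ| + |∫ x, s x * g x ∂μ|
      ≤ (∫ x, |s x * f x| ∂μ) + ∫ x, |s x * g x| ∂μ :=
        add_le_add abs_integral_le_integral_abs abs_integral_le_integral_abs
    _ = ∫ x, (|s x * f x| + |s x * g x|) ∂μ := (integral_add hsf.abs hsg.abs).symm
    _ ≤ ∫ x, (s x ^ 2 + f x ^ 2 + g x ^ 2) / 2 ∂μ := by
        refine integral_mono_ae (hsf.abs.add hsg.abs) hsq ?_
        filter_upwards [hfg] with x hx
        simpa [hx] using abs_mul_add_abs_mul_le (s x) (f x) (g x)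
    _ = ((∫ x, s x ^ 2 ∂μ) + (∫ x, f x ^ 2 ∂μ) + ∫ x, g x ^ 2 ∂μ) / 2 := by
        have hsf2 : Integrable (fun x => s x ^ 2 + f x ^ 2) μ :=
          hs.integrable_sq.add hf.integrable_sq
        rw [integral_div, integral_add hsf2 hg.integrable_sq,
          integral_add hs.integrable_sq hf.integrable_sq]

section Translates

variable {s : ℝ → ℝ} {a b : ℝ}

lemma ae_comp_sub_eq_zero (hsupp : ∀ᵐ t, t ∉ Icc a b → s t = 0) (c : ℝ) :
    ∀ᵐ t, t - c ∉ Icc a b → s (t - c) = 0 :=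
  (measurePreserving_sub_right volume c).quasiMeasurePreserving.ae hsupp

lemma ae_comp_sub_mul_comp_sub_eq_zero (hsupp : ∀ᵐ t, t ∉ Icc a b → s t = 0) {c d : ℝ}
    (hcd : b - a ≤ c - d) : ∀ᵐ t, s (t - c) * s (t - d) = 0 := by
  filter_upwards [ae_comp_sub_eq_zero hsupp c, ae_comp_sub_eq_zero hsupp d,
    measure_singleton (a + c) |> measure_eq_zero_iff_ae_notMem.mp] with t hc hd ht
  by_contra hne
  obtain ⟨hc0, hd0⟩ := mul_ne_zero_iff.mp hne
  have hca : a ≤ t - c := (not_imp_comm.mp hc hc0).1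
  have hdb : t - d ≤ b := (not_imp_comm.mp hd hd0).2
  exact ht (by simp only [mem_singleton_iff]; linarith)

lemma setIntegral_Icc_eq_integral_of_Icc_subset {F : ℝ → ℝ} {a' b' : ℝ}
    (hsupp : ∀ᵐ t, t ∉ Icc a b → F t = 0) (ha : a' ≤ a) (hb : b ≤ b') :
    ∫ t in Icc a' b', F t = ∫ t, F t :=
  setIntegral_eq_integral_of_ae_compl_eq_zero <| hsupp.mono fun _ h ht =>
    h fun hab => ht ⟨ha.trans hab.1, hab.2.trans hb⟩

/-- Delaying by `τ` and wrapping the part pushed beyond `b` around to the start is a cyclic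
rotation of `[a, b]`, so it preserves the integral of a function supported there. -/
lemma setIntegral_comp_sub_add_setIntegral_comp_add_sub {F : ℝ → ℝ} (hF : Integrable F)
    (hsupp : ∀ᵐ t, t ∉ Icc a b → F t = 0) {τ : ℝ} (hτ0 : 0 ≤ τ) (hτb : τ ≤ b - a) :
    (∫ t in Icc a b, F (t - τ)) + ∫ t in Icc a b, F (t + (b - a) - τ) = ∫ t, F t := by
  have hab : a ≤ b := by linarith
  simp only [integral_Icc_eq_integral_Ioc, ← intervalIntegral.integral_of_le hab, add_sub_assoc,
    intervalIntegral.integral_comp_sub_right, intervalIntegral.integral_comp_add_right]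
  rw [show a + (b - a - τ) = b - τ by ring, intervalIntegral.integral_add_adjacent_intervals
      hF.intervalIntegrable hF.intervalIntegrable,
    intervalIntegral.integral_of_le (by linarith), ← integral_Icc_eq_integral_Ioc]
  exact setIntegral_Icc_eq_integral_of_Icc_subset hsupp (by linarith) (by linarith)

end Translates

theorem stmt_13_general (T : ℝ) (s : ℝ → ℝ)
    (hs : MemLp s 2 (volume : Measure ℝ))
    (hsupp : ∀ᵐ t : ℝ, t ∉ Set.Icc 0 T → s t = 0)
    (hnorm : ∫ t : ℝ, (s t)^2 = 1)
    (τ : ℝ) (hτ : τ ∈ Set.Ioc 0 T) :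
    |∫ t : ℝ, s t * s (t - τ)| + |∫ t : ℝ, s t * s (t + T - τ)| ≤ 1 := by
  obtain ⟨hτ0, hτT⟩ := hτ
  have hsupp_sq : ∀ᵐ t, t ∉ Icc 0 T → s t ^ 2 = 0 := hsupp.mono fun t h ht => by simp [h ht]
  have hshift : ∀ c, MemLp (fun t => s (t - c)) 2 volume := fun c =>
    hs.comp_measurePreserving (measurePreserving_sub_right volume c)
  have hwrap : ∀ t, t + T - τ = t - (τ - T) := fun t => by ring
  have hrestrict : ∀ c, ∫ t in Icc 0 T, s t * s (t - c) = ∫ t, s t * s (t - c) := fun c =>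
    setIntegral_Icc_eq_integral_of_Icc_subset (hsupp.mono fun t h ht => by simp [h ht])
      le_rfl le_rfl
  have henergy := setIntegral_comp_sub_add_setIntegral_comp_add_sub hs.integrable_sq hsupp_sq
    hτ0.le (by rwa [sub_zero])
  simp only [sub_zero, hwrap] at henergy
  calc |∫ t, s t * s (t - τ)| + |∫ t, s t * s (t + T - τ)|
      = |∫ t in Icc 0 T, s t * s (t - τ)| + |∫ t in Icc 0 T, s t * s (t - (τ - T))| := by
        simp only [hwrap, hrestrict]
    _ ≤ ((∫ t in Icc 0 T, s t ^ 2) + (∫ t in Icc 0 T, s (t - τ) ^ 2) +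
          ∫ t in Icc 0 T, s (t - (τ - T)) ^ 2) / 2 :=
        abs_integral_mul_add_abs_integral_mul_le (hs.restrict _) ((hshift τ).restrict _)
          ((hshift _).restrict _)
          (ae_restrict_of_ae (ae_comp_sub_mul_comp_sub_eq_zero hsupp (by linarith)))
    _ = 1 := by
        rw [add_assoc, henergy, setIntegral_Icc_eq_integral_of_Icc_subset hsupp_sq le_rfl le_rfl,
          hnorm]
        norm_num

/-- for a unit-energy square-integrable waveform `s` supported in
`[0, T]` and a relative delay `τ ∈ (0, T]`, the two correlation coefficients satisfy
`|∫ s(t)s(t-τ)dt| + |∫ s(t)s(t+T-τ)dt| ≤ 1`. -/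
theorem stmt_13 (T : ℝ) (hT : 0 < T) (s : ℝ → ℝ)
    (hs : MemLp s 2 (volume : Measure ℝ))
    (hsupp : ∀ᵐ t : ℝ, t ∉ Set.Icc 0 T → s t = 0)
    (hnorm : ∫ t : ℝ, (s t)^2 = 1)
    (τ : ℝ) (hτ : τ ∈ Set.Ioc 0 T) :
    |∫ t : ℝ, s t * s (t - τ)| + |∫ t : ℝ, s t * s (t + T - τ)| ≤ 1 :=
  stmt_13_general T s hs hsupp hnorm τ hτ
end

section
/- Let M ≥ 1 be an integer, T > 0, τ ∈ (0, T], and let s : ℝ → ℝ be square-integrable with s = 0 almost everywhere outside [0, MT] and ∫_ℝ s(t)² dt = 1. Set f₁(t) = s(t), f₂(t) = s(t−τ), F_j(t, ω) = Σ_{k=0}^{M} f_j(t+kT)·e^{−ikω}, and let T(ω) = ∫₀^T F(t,ω)·F(t,ω)^† dt be the associated 2×2 Gram matrix, where F(t,ω) = (F₁(t,ω), F₂(t,ω))ᵀ. Suppose that for every ω ∈ [−π, π] the functions t ↦ F₁(t,ω) and t ↦ F₂(t,ω), restricted to [0, T], are linearly independent as elements of L²([0,T]; ℂ). Then there exists λ_min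 > 0 such that for every ω ∈ [−π, π] and every b ∈ ℂ² with ‖b‖ = 1, λ_min ≤ b^† T(ω) b ≤ 2(2M+1). -/
/-!
In `L²([0, T])` the folded waveform `F_j(·, ω)` is the vector `∑ₖ e^{-ikω} f_j(· + kT)`, which
depends continuously on `ω`, and `T(ω)` is the transpose of the Gram matrix of `F₀(·, ω)` and
`F₁(·, ω)`; hence `b† T(ω) b = ‖b̄₀ F₀ + b̄₁ F₁‖²`. Linear independence makes this quadratic form
positive on the compact set `[-π, π] × {‖b‖ = 1}`, so it has a positive minimum there. For the upper
bound, Cauchy–Schwarz gives `‖F_j‖² ≤ (M + 1) ∑ₖ ∫₀ᵀ f_j(t + kT)² dt`, and since the windows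
`[kT, (k + 1)T]` do not overlap, the sum is at most `∫ f_j² = 1`; so the form is at most `2(M + 1)`.
-/

open MeasureTheory Real Matrix
open scoped ComplexConjugate InnerProductSpace ComplexOrder

namespace Matrix

variable {n 𝕜 E : Type*} [Fintype n] [RCLike 𝕜] [NormedAddCommGroup E] [InnerProductSpace 𝕜 E]

theorem re_star_dotProduct_gram_mulVec (v : n → E) (b : n → 𝕜) :
    RCLike.re (star b ⬝ᵥ gram 𝕜 v *ᵥ b) = ‖∑ i, b i • v i‖ ^ 2 := by
  rw [star_dotProduct_gram_mulVec, inner_self_eq_norm_sq]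

theorem re_star_dotProduct_gram_mulVec_le (v : n → E) (b : n → 𝕜) :
    RCLike.re (star b ⬝ᵥ gram 𝕜 v *ᵥ b) ≤ (∑ i, ‖b i‖ ^ 2) * ∑ i, ‖v i‖ ^ 2 := by
  rw [re_star_dotProduct_gram_mulVec]
  calc ‖∑ i, b i • v i‖ ^ 2 ≤ (∑ i, ‖b i‖ * ‖v i‖) ^ 2 := by
        gcongr
        exact (norm_sum_le _ _).trans_eq (by simp only [norm_smul])
    _ ≤ _ := Finset.sum_mul_sq_le_sq_mul_sq _ _ _

theorem exists_pos_le_re_star_dotProduct_gram_mulVec {X : Type*} [TopologicalSpace X]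
    {K : Set X} (hK : IsCompact K) {S : Set (n → 𝕜)} (hS : IsCompact S) (hS0 : 0 ∉ S)
    {v : X → n → E} (hv : Continuous v) (hli : ∀ x ∈ K, LinearIndependent 𝕜 (v x)) :
    ∃ c > 0, ∀ x ∈ K, ∀ b ∈ S, c ≤ RCLike.re (star b ⬝ᵥ gram 𝕜 (v x) *ᵥ b) := by
  have hcont : Continuous fun p : X × (n → 𝕜) =>
      RCLike.re (star p.2 ⬝ᵥ gram 𝕜 (v p.1) *ᵥ p.2) := by
    simp_rw [re_star_dotProduct_gram_mulVec]
    fun_prop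
  obtain ⟨c, hc, hle⟩ := (hK.prod hS).exists_forall_le' hcont.continuousOn (a := 0) <| by
    rintro ⟨x, b⟩ ⟨hx, hb⟩
    exact (RCLike.pos_iff.mp <| (posDef_gram_of_linearIndependent (hli x hx)).dotProduct_mulVec_pos
      (ne_of_mem_of_not_mem hb hS0)).1
  exact ⟨c, hc, fun x hx b hb => hle (x, b) ⟨hx, hb⟩⟩

end Matrix

theorem isCompact_setOf_sum_norm_sq_eq_one {n 𝕜 : Type*} [Fintype n] [RCLike 𝕜] :
    IsCompact {b : n → 𝕜 | ∑ i, ‖b i‖ ^ 2 = 1} := by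
  refine Metric.isCompact_of_isClosed_isBounded (isClosed_eq (by fun_prop) continuous_const)
    ((Metric.isBounded_closedBall (x := 0) (r := 1)).subset fun b hb => ?_)
  rw [Metric.mem_closedBall, dist_zero_right, pi_norm_le_iff_of_nonneg zero_le_one]
  intro i
  rw [← sq_le_one_iff₀ (norm_nonneg _), ← hb]
  exact Finset.single_le_sum (fun j _ => sq_nonneg ‖b j‖) (Finset.mem_univ i)

namespace MeasureTheory

variable {α : Type*} [MeasurableSpace α] {μ : Measure α}

section Lp

variable {𝕜 E ι : Type*} [NormedField 𝕜] [NormedAddCommGroup E] [NormedSpace 𝕜 E]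
  {p : ENNReal}

theorem Lp.coeFn_sum_smul (s : Finset ι) (c : ι → 𝕜) {u : ι → Lp E p μ} {f : ι → α → E}
    (h : ∀ i ∈ s, u i =ᵐ[μ] f i) :
    ⇑(∑ i ∈ s, c i • u i) =ᵐ[μ] fun x => ∑ i ∈ s, c i • f i x := by
  classical
  induction s using Finset.induction_on with
  | empty => simp only [Finset.sum_empty]; exact Lp.coeFn_zero E p μ
  | insert i s hi ih =>
    simp only [Finset.sum_insert hi, Finset.forall_mem_insert] at h ⊢
    filter_upwards [Lp.coeFn_add (c i • u i) (∑ j ∈ s, c j • u j), Lp.coeFn_smul (c i) (u i),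
      h.1, ih h.2] with x hadd hsmul hi hs
    rw [hadd, Pi.add_apply, hsmul, Pi.smul_apply, hi, hs]

theorem Lp.linearIndependent_iff_ae [Fact (1 ≤ p)] [Fintype ι] {u : ι → Lp E p μ}
    {f : ι → α → E} (h : ∀ i, u i =ᵐ[μ] f i) :
    LinearIndependent 𝕜 u ↔ ∀ c : ι → 𝕜, (∀ᵐ x ∂μ, ∑ i, c i • f i x = 0) → ∀ i, c i = 0 := by
  rw [Fintype.linearIndependent_iff]
  refine forall_congr' fun c => imp_congr_left ?_
  rw [Lp.eq_zero_iff_ae_eq_zero]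
  exact ⟨fun hz => (Lp.coeFn_sum_smul _ c fun i _ => h i).symm.trans hz,
    fun hz => (Lp.coeFn_sum_smul _ c fun i _ => h i).trans hz⟩

end Lp

theorem L2.sq_norm_eq_integral {𝕜 E : Type*} [RCLike 𝕜] [NormedAddCommGroup E]
    [InnerProductSpace 𝕜 E]
    (f : α →₂[μ] E) : ‖f‖ ^ 2 = ∫ x, ‖f x‖ ^ 2 ∂μ := by
  rw [← inner_self_eq_norm_sq (𝕜 := 𝕜), L2.inner_def]
  simp_rw [inner_self_eq_norm_sq_to_K]
  norm_cast

theorem L2.integral_mul_conj_eq_inner {u v : α →₂[μ] ℂ} {f g : α → ℂ} (hu : u =ᵐ[μ] f)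
    (hv : v =ᵐ[μ] g) : ∫ x, f x * conj (g x) ∂μ = ⟪v, u⟫_ℂ := by
  rw [L2.inner_def]
  refine integral_congr_ae ?_
  filter_upwards [hu, hv] with x hux hvx
  rw [hux, hvx, RCLike.inner_apply, mul_comm]

end MeasureTheory

theorem sum_setIntegral_Icc_comp_add_mul_le {g : ℝ → ℝ} (hg : Integrable g) (hg0 : 0 ≤ g)
    {T : ℝ} (hT : 0 ≤ T) (n : ℕ) :
    ∑ k ∈ Finset.range n, ∫ t in Set.Icc 0 T, g (t + k * T) ≤ ∫ t, g t := by
  have hshift : ∀ k : ℕ,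
      ∫ t in Set.Icc 0 T, g (t + k * T) = ∫ t in k * T..(k + 1 : ℕ) * T, g t := by
    intro k
    rw [integral_Icc_eq_integral_Ioc, ← intervalIntegral.integral_of_le hT,
      intervalIntegral.integral_comp_add_right, zero_add]
    push_cast
    ring_nf
  simp_rw [hshift]
  rw [intervalIntegral.sum_integral_adjacent_intervals fun k _ => hg.intervalIntegrable,
    Nat.cast_zero, zero_mul, intervalIntegral.integral_of_le (by positivity)]
  exact setIntegral_le_integral hg (Filter.Eventually.of_forall hg0)

noncomputable def foldedWaveform (a : ℝ → ℝ) (M : ℕ) (T t ω : ℝ) : ℂ :=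
  ∑ k ∈ Finset.range (M + 1),
    ((a (t + (k : ℝ) * T) : ℝ) : ℂ) * Complex.exp (-((k : ℂ) * ω * Complex.I))

section FoldedLp

variable {a : ℝ → ℝ}

theorem MeasureTheory.MemLp.ofReal_comp_add_right (ha : MemLp a 2 volume) (c : ℝ) (s : Set ℝ) :
    MemLp (fun t => (a (t + c) : ℂ)) 2 (volume.restrict s) :=
  ((ha.comp_measurePreserving (measurePreserving_add_right volume c)).ofReal).restrict s

/-- Defined as a sum in `L²` rather than as the class of `foldedWaveform`, so that continuity in
`ω` is immediate. -/
noncomputable def foldedLp (ha : MemLp a 2 volume) (M : ℕ) (T ω : ℝ) :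
    Lp ℂ 2 (volume.restrict (Set.Icc 0 T)) :=
  ∑ k ∈ Finset.range (M + 1),
    Complex.exp (-((k : ℂ) * ω * Complex.I)) • (ha.ofReal_comp_add_right (k * T) _).toLp _

theorem coeFn_foldedLp (ha : MemLp a 2 volume) (M : ℕ) (T ω : ℝ) :
    foldedLp ha M T ω =ᵐ[volume.restrict (Set.Icc 0 T)] fun t => foldedWaveform a M T t ω := by
  refine (Lp.coeFn_sum_smul _ _ fun k _ => MemLp.coeFn_toLp _).trans (ae_of_all _ fun t => ?_)
  simp only [foldedWaveform, smul_eq_mul, mul_comm]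

theorem continuous_foldedLp (ha : MemLp a 2 volume) (M : ℕ) (T : ℝ) :
    Continuous (foldedLp ha M T) := by
  unfold foldedLp
  fun_prop

theorem norm_exp_neg_natCast_mul_mul_I (k : ℕ) (ω : ℝ) :
    ‖Complex.exp (-((k : ℂ) * ω * Complex.I))‖ = 1 := by
  simp [Complex.norm_exp]

theorem sq_norm_foldedLp_le (ha : MemLp a 2 volume) (M : ℕ) {T : ℝ} (hT : 0 ≤ T) (ω : ℝ) :
    ‖foldedLp ha M T ω‖ ^ 2 ≤ (M + 1) * ∫ t, a t ^ 2 := by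
  set u : ℕ → Lp ℂ 2 (volume.restrict (Set.Icc 0 T)) :=
    fun k => (ha.ofReal_comp_add_right (k * T) _).toLp _
  have hu : ∀ k : ℕ, ‖u k‖ ^ 2 = ∫ t in Set.Icc 0 T, a (t + k * T) ^ 2 := fun k => by
    rw [L2.sq_norm_eq_integral (𝕜 := ℂ)]
    refine integral_congr_ae ((MemLp.coeFn_toLp (ha.ofReal_comp_add_right (k * T) _)).mono
      fun t ht => ?_)
    simp only [u, ht, Complex.norm_real, Real.norm_eq_abs, sq_abs]
  calc ‖foldedLp ha M T ω‖ ^ 2 ≤ (∑ k ∈ Finset.range (M + 1), ‖u k‖) ^ 2 := by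
        gcongr
        refine (norm_sum_le _ _).trans_eq (Finset.sum_congr rfl fun k _ => ?_)
        rw [norm_smul, norm_exp_neg_natCast_mul_mul_I, one_mul]
    _ ≤ (M + 1) * ∑ k ∈ Finset.range (M + 1), ‖u k‖ ^ 2 := by
        simpa using sq_sum_le_card_mul_sum_sq (s := Finset.range (M + 1)) (f := fun k => ‖u k‖)
    _ ≤ (M + 1) * ∫ t, a t ^ 2 := by
        simp_rw [hu]
        gcongr
        exact sum_setIntegral_Icc_comp_add_mul_le ha.integrable_sq (fun t => sq_nonneg (a t)) hT _

end FoldedLp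

theorem stmt_15_general (M : ℕ) (T τ : ℝ) (hT : 0 < T)
    (s : ℝ → ℝ) (hs : MemLp s 2 (volume : Measure ℝ))
    (hnorm : ∫ t : ℝ, (s t)^2 = 1)
    (f : Fin 2 → ℝ → ℝ) (hf0 : f 0 = s) (hf1 : f 1 = fun t => s (t - τ))
    (F : Fin 2 → ℝ → ℝ → ℂ)
    (hF : ∀ (j : Fin 2) (t ω : ℝ), F j t ω =
      ∑ k ∈ Finset.range (M + 1),
        ((f j (t + (k : ℝ) * T) : ℝ) : ℂ) * Complex.exp (-((k : ℂ) * ω * Complex.I)))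
    (Tm : ℝ → Matrix (Fin 2) (Fin 2) ℂ)
    (hTm : ∀ (ω : ℝ) (j l : Fin 2), Tm ω j l =
      ∫ t in Set.Icc (0 : ℝ) T, F j t ω * (starRingEnd ℂ) (F l t ω))
    (hLI : ∀ ω ∈ Set.Icc (-π) π, ∀ c₁ c₂ : ℂ,
      (∀ᵐ t ∂(volume.restrict (Set.Icc (0 : ℝ) T)),
        c₁ * F 0 t ω + c₂ * F 1 t ω = 0) → c₁ = 0 ∧ c₂ = 0) :
    ∃ lmin : ℝ, 0 < lmin ∧
      ∀ ω ∈ Set.Icc (-π) π, ∀ b : Fin 2 → ℂ,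
        ‖b 0‖ ^ 2 + ‖b 1‖ ^ 2 = 1 →
          lmin ≤ (dotProduct (star b) ((Tm ω).mulVec b)).re ∧
          (dotProduct (star b) ((Tm ω).mulVec b)).re ≤ 2 * (2 * (M : ℝ) + 1) := by
  obtain rfl : F = fun j => foldedWaveform (f j) M T := funext₃ hF
  have hf : ∀ j, MemLp (f j) 2 volume := Fin.forall_fin_two.mpr
    ⟨hf0 ▸ hs, hf1 ▸ hs.comp_measurePreserving (measurePreserving_sub_right volume τ)⟩
  have hf_sq : ∀ j, ∫ t, f j t ^ 2 = 1 := Fin.forall_fin_two.mpr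
    ⟨hf0 ▸ hnorm, hf1 ▸ (integral_sub_right_eq_self (fun t => s t ^ 2) τ).trans hnorm⟩
  set Φ : ℝ → Fin 2 → Lp ℂ 2 (volume.restrict (Set.Icc 0 T)) :=
    fun ω j => foldedLp (hf j) M T ω
  have hTm_gram : ∀ ω, Tm ω = (gram ℂ (Φ ω))ᵀ := fun ω => by
    ext j l
    rw [hTm, transpose_apply, gram_apply]
    exact L2.integral_mul_conj_eq_inner (coeFn_foldedLp _ _ _ _) (coeFn_foldedLp _ _ _ _)
  have hli : ∀ ω ∈ Set.Icc (-π) π, LinearIndependent ℂ (Φ ω) := fun ω hω => by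
    refine (Lp.linearIndependent_iff_ae fun j => coeFn_foldedLp (hf j) M T ω).mpr fun c hc => ?_
    obtain ⟨h0, h1⟩ := hLI ω hω (c 0) (c 1) (by simpa [Fin.sum_univ_two] using hc)
    exact Fin.forall_fin_two.mpr ⟨h0, h1⟩
  obtain ⟨c, hc, hle⟩ := exists_pos_le_re_star_dotProduct_gram_mulVec isCompact_Icc
    isCompact_setOf_sum_norm_sq_eq_one (by simp)
    (continuous_pi fun j => continuous_foldedLp (hf j) M T) hli
  refine ⟨c, hc, fun ω hω b hb => ?_⟩
  have hb' : ∑ i, ‖star b i‖ ^ 2 = 1 := by simpa [Fin.sum_univ_two] using hb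
  have hform : star b ⬝ᵥ Tm ω *ᵥ b = star (star b) ⬝ᵥ gram ℂ (Φ ω) *ᵥ star b := by
    rw [hTm_gram, dotProduct_transpose_mulVec, star_star]
  rw [hform]
  have hup := re_star_dotProduct_gram_mulVec_le (Φ ω) (star b)
  have hΦ := fun j => sq_norm_foldedLp_le (hf j) M hT.le ω
  simp only [RCLike.re_to_complex, hb', one_mul, Fin.sum_univ_two, hf_sq, mul_one] at hup hΦ
  exact ⟨hle ω hω _ hb', by linarith [hΦ 0, hΦ 1]⟩

/-- if for every `ω ∈ [-π, π]` the folded waveforms `F₁(·,ω)`,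
`F₂(·,ω)` are linearly independent in `L²([0,T]; ℂ)`, then the quadratic form of
the Gram matrix `T(ω)` is bounded below by some `λ_min > 0` uniformly in `ω` and
above by `2(2M+1)`, on unit vectors `b ∈ ℂ²`. -/
theorem stmt_15 (M : ℕ) (hM : 1 ≤ M) (T τ : ℝ) (hT : 0 < T) (hτ : τ ∈ Set.Ioc 0 T)
    (s : ℝ → ℝ) (hs : MemLp s 2 (volume : Measure ℝ))
    (hsupp : ∀ᵐ t : ℝ, t ∉ Set.Icc 0 ((M : ℝ) * T) → s t = 0)
    (hnorm : ∫ t : ℝ, (s t)^2 = 1)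
    (f : Fin 2 → ℝ → ℝ) (hf0 : f 0 = s) (hf1 : f 1 = fun t => s (t - τ))
    (F : Fin 2 → ℝ → ℝ → ℂ)
    (hF : ∀ (j : Fin 2) (t ω : ℝ), F j t ω =
      ∑ k ∈ Finset.range (M + 1),
        ((f j (t + (k : ℝ) * T) : ℝ) : ℂ) * Complex.exp (-((k : ℂ) * ω * Complex.I)))
    (Tm : ℝ → Matrix (Fin 2) (Fin 2) ℂ)
    (hTm : ∀ (ω : ℝ) (j l : Fin 2), Tm ω j l =
      ∫ t in Set.Icc (0 : ℝ) T, F j t ω * (starRingEnd ℂ) (F l t ω))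
    (hLI : ∀ ω ∈ Set.Icc (-π) π, ∀ c₁ c₂ : ℂ,
      (∀ᵐ t ∂(volume.restrict (Set.Icc (0 : ℝ) T)),
        c₁ * F 0 t ω + c₂ * F 1 t ω = 0) → c₁ = 0 ∧ c₂ = 0) :
    ∃ lmin : ℝ, 0 < lmin ∧
      ∀ ω ∈ Set.Icc (-π) π, ∀ b : Fin 2 → ℂ,
        ‖b 0‖ ^ 2 + ‖b 1‖ ^ 2 = 1 →
          lmin ≤ (dotProduct (star b) ((Tm ω).mulVec b)).re ∧
          (dotProduct (star b) ((Tm ω).mulVec b)).re ≤ 2 * (2 * (M : ℝ) + 1) :=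
  stmt_15_general M T τ hT s hs hnorm f hf0 hf1 F hF Tm hTm hLI
end

section
/- Let ν₁, ν₂ : [−π, π] → ℝ be measurable functions with ν₁(ω) > 0, ν₂(ω) > 0 and ν₁(ω) + ν₂(ω) = 2 for almost every ω ∈ [−π, π], and let x₁, x₂, ρ > 0. Then (1/(2π))·∫_{−π}^{π} ln[ 1 + (ρ/2)·(x₁+x₂)·(ν₁(ω)+ν₂(ω)) + ρ²·x₁x₂·ν₁(ω)ν₂(ω) ] dω > ln(1 + ρ(x₁+x₂)). -/
open MeasureTheory Real

/-! With `ν₁ + ν₂ = 2` the integrand is `log (1 + ρ (x₁ + x₂) + ρ² x₁ x₂ ν₁ ν₂)`. Since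
`0 < ν₁ ν₂ ≤ ((ν₁ + ν₂) / 2)² = 1`, it lies a.e. strictly above the constant
`log (1 + ρ (x₁ + x₂))` and below `log (1 + ρ (x₁ + x₂) + ρ² x₁ x₂)`. Being bounded it is
integrable, and the average over `[-π, π]` of a function a.e. strictly above a constant
exceeds that constant. -/

namespace MeasureTheory

variable {α : Type*} [MeasurableSpace α] {μ : Measure α} {f : α → ℝ}

theorem integral_pos_of_ae_pos [NeZero μ] (hfi : Integrable f μ) (hf : ∀ᵐ x ∂μ, 0 < f x) :
    0 < ∫ x, f x ∂μ := by
  rw [integral_pos_iff_support_of_nonneg_ae (hf.mono fun _ h => h.le) hfi]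
  have hsupp : μ Set.univ ≤ μ (Function.support f) :=
    measure_mono_ae (hf.mono fun _ h _ => h.ne')
  exact (NeZero.pos (μ Set.univ)).trans_le hsupp

theorem measureReal_univ_mul_lt_integral_of_ae_lt [IsFiniteMeasure μ] [NeZero μ] {c : ℝ}
    (hfi : Integrable f μ) (hf : ∀ᵐ x ∂μ, c < f x) :
    μ.real Set.univ * c < ∫ x, f x ∂μ := by
  have hpos : 0 < ∫ x, (f x - c) ∂μ :=
    integral_pos_of_ae_pos (hfi.sub (integrable_const c)) (hf.mono fun _ h => sub_pos.2 h)
  rw [integral_sub hfi (integrable_const c), integral_const, smul_eq_mul] at hpos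
  linarith

end MeasureTheory

theorem mul_le_one_of_add_eq_two {a b : ℝ} (h : a + b = 2) : a * b ≤ 1 := by
  nlinarith [four_mul_le_sq_add a b]

section SpaceTimeCoding

/-- The integrand of `I_{E-MacA}` at a frequency `ω` where the waveform correlation matrix has
eigenvalues `a = ν₁ ω`, `b = ν₂ ω`. -/
noncomputable def stcLogDet (ρ x₁ x₂ a b : ℝ) : ℝ :=
  Real.log (1 + (ρ / 2) * (x₁ + x₂) * (a + b) + ρ ^ 2 * x₁ * x₂ * (a * b))

variable {ρ x₁ x₂ a b : ℝ}

theorem stcLogDet_of_add_eq_two (hab : a + b = 2) :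
    stcLogDet ρ x₁ x₂ a b = Real.log (1 + ρ * (x₁ + x₂) + ρ ^ 2 * x₁ * x₂ * (a * b)) := by
  rw [stcLogDet, hab]
  ring_nf

theorem log_one_add_lt_stcLogDet (hx₁ : 0 < x₁) (hx₂ : 0 < x₂) (hρ : 0 < ρ)
    (ha : 0 < a) (hb : 0 < b) (hab : a + b = 2) :
    Real.log (1 + ρ * (x₁ + x₂)) < stcLogDet ρ x₁ x₂ a b := by
  rw [stcLogDet_of_add_eq_two hab]
  refine Real.log_lt_log (by positivity) ?_
  have : 0 < ρ ^ 2 * x₁ * x₂ * (a * b) := by positivity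
  linarith

theorem stcLogDet_le (hx₁ : 0 < x₁) (hx₂ : 0 < x₂) (hρ : 0 < ρ)
    (ha : 0 < a) (hb : 0 < b) (hab : a + b = 2) :
    stcLogDet ρ x₁ x₂ a b ≤ Real.log (1 + ρ * (x₁ + x₂) + ρ ^ 2 * x₁ * x₂) := by
  rw [stcLogDet_of_add_eq_two hab]
  refine Real.log_le_log (by positivity) ?_
  have hk : 0 < ρ ^ 2 * x₁ * x₂ := by positivity
  nlinarith [mul_le_one_of_add_eq_two hab]

end SpaceTimeCoding

/-- asynchronous space-time coding strictly increases the mutual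
information over synchronous coding at every finite SNR, when the eigenvalue
functions `ν₁, ν₂` are positive with `ν₁ + ν₂ = 2` a.e. on `[-π, π]`. -/
theorem stmt_16 (ν₁ ν₂ : ℝ → ℝ) (hm1 : Measurable ν₁) (hm2 : Measurable ν₂)
    (hae : ∀ᵐ ω ∂(volume.restrict (Set.Icc (-π) π)),
      0 < ν₁ ω ∧ 0 < ν₂ ω ∧ ν₁ ω + ν₂ ω = 2)
    (x₁ x₂ ρ : ℝ) (hx₁ : 0 < x₁) (hx₂ : 0 < x₂) (hρ : 0 < ρ) :
    Real.log (1 + ρ * (x₁ + x₂)) <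
      (1 / (2 * π)) *
        ∫ ω in Set.Icc (-π) π,
          Real.log (1 + (ρ / 2) * (x₁ + x₂) * (ν₁ ω + ν₂ ω)
            + ρ^2 * x₁ * x₂ * (ν₁ ω * ν₂ ω)) := by
  change _ < _ * ∫ ω in Set.Icc (-π) π, stcLogDet ρ x₁ x₂ (ν₁ ω) (ν₂ ω)
  have hvol : (volume.restrict (Set.Icc (-π) π)).real Set.univ = 2 * π := by
    rw [measureReal_restrict_apply_univ, Real.volume_real_Icc_of_le (by linarith [pi_pos])]
    ring
  have : NeZero (volume.restrict (Set.Icc (-π) π)) := ⟨fun h => by simp [h] at hvol⟩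
  have hbounds := hae.mono fun ω ⟨h₁, h₂, h₁₂⟩ =>
    (⟨(log_one_add_lt_stcLogDet hx₁ hx₂ hρ h₁ h₂ h₁₂).le, stcLogDet_le hx₁ hx₂ hρ h₁ h₂ h₁₂⟩ :
      stcLogDet ρ x₁ x₂ (ν₁ ω) (ν₂ ω) ∈ Set.Icc _ _)
  have hint : Integrable (fun ω => stcLogDet ρ x₁ x₂ (ν₁ ω) (ν₂ ω))
      (volume.restrict (Set.Icc (-π) π)) :=
    Integrable.of_mem_Icc _ _ (by unfold stcLogDet; fun_prop) hbounds
  have hlt := measureReal_univ_mul_lt_integral_of_ae_lt hint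
    (hae.mono fun ω ⟨h₁, h₂, h₁₂⟩ => log_one_add_lt_stcLogDet hx₁ hx₂ hρ h₁ h₂ h₁₂)
  rw [hvol] at hlt
  rw [one_div_mul_eq_div, lt_div_iff₀ (by positivity)]
  linarith
end

section
/- Let 0 < λ_m ≤ λ_M be reals, let ν₁, ν₂ : [−π, π] → ℝ be measurable functions with λ_m ≤ ν_k(ω) ≤ λ_M for almost every ω ∈ [−π, π] and k = 1, 2, and let x₁, x₂, ρ > 0. Then ln(1 + ρx₁λ_m) + ln(1 + ρx₂λ_m) ≤ (1/(2π))·∫_{−π}^{π} ln[ 1 + (ρ/2)·(x₁+x₂)·(ν₁(ω)+ν₂(ω)) + ρ²·x₁x₂·ν₁(ω)ν₂(ω) ] dω ≤ ln(1 + ρx₁λ_M) + ln(1 + ρx₂λ_M). -/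
/-!
Since `1 + (ρ/2)(x₁+x₂)(a+b) + ρ²x₁x₂ab` is monotone in `a, b ≥ 0` and equals
`(1 + ρx₁κ)(1 + ρx₂κ)` at `a = b = κ`, its logarithm lies a.e. between the two parallel-channel
rates at `κ = λ_m` and `κ = λ_M`; averaging over `[-π, π]` preserves these bounds.
-/

open MeasureTheory Real Set

section Average

variable {α : Type*} [MeasurableSpace α] {μ : Measure α} {s : Set α}

theorem setAverage_mem_Icc_of_ae_mem_Icc (hs : μ s ≠ ⊤) (hs₀ : μ s ≠ 0) {f : α → ℝ}
    (hf : AEStronglyMeasurable f (μ.restrict s)) {m M : ℝ}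
    (hfs : ∀ᵐ x ∂μ.restrict s, f x ∈ Icc m M) :
    ⨍ x in s, f x ∂μ ∈ Icc m M := by
  have : IsFiniteMeasure (μ.restrict s) := isFiniteMeasure_restrict.2 hs
  have : NeZero (μ.restrict s) := ⟨mt Measure.restrict_eq_zero.1 hs₀⟩
  exact (convex_Icc m M).average_mem isClosed_Icc hfs ⟨hf, .of_mem_Icc m M hfs⟩

end Average

noncomputable def mutualInfoArg (ρ x₁ x₂ ν₁ ν₂ : ℝ) : ℝ :=
  1 + (ρ / 2) * (x₁ + x₂) * (ν₁ + ν₂) + ρ ^ 2 * x₁ * x₂ * (ν₁ * ν₂)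

section MutualInfoArg

variable {ρ x₁ x₂ : ℝ}

theorem mutualInfoArg_self (ρ x₁ x₂ κ : ℝ) :
    mutualInfoArg ρ x₁ x₂ κ κ = (1 + ρ * x₁ * κ) * (1 + ρ * x₂ * κ) := by
  unfold mutualInfoArg
  ring

theorem mutualInfoArg_mono (hρ : 0 ≤ ρ) (hx₁ : 0 ≤ x₁) (hx₂ : 0 ≤ x₂) {a b a' b' : ℝ}
    (ha : 0 ≤ a) (hb : 0 ≤ b) (haa' : a ≤ a') (hbb' : b ≤ b') :
    mutualInfoArg ρ x₁ x₂ a b ≤ mutualInfoArg ρ x₁ x₂ a' b' := by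
  have ha' : 0 ≤ a' := ha.trans haa'
  unfold mutualInfoArg
  gcongr

theorem log_mutualInfoArg_mem_Icc (hρ : 0 ≤ ρ) (hx₁ : 0 ≤ x₁) (hx₂ : 0 ≤ x₂) {κm κM ν₁ ν₂ : ℝ}
    (hκm : 0 ≤ κm) (hν₁ : ν₁ ∈ Icc κm κM) (hν₂ : ν₂ ∈ Icc κm κM) :
    log (mutualInfoArg ρ x₁ x₂ ν₁ ν₂) ∈
      Icc (log (1 + ρ * x₁ * κm) + log (1 + ρ * x₂ * κm))
        (log (1 + ρ * x₁ * κM) + log (1 + ρ * x₂ * κM)) := by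
  have hκM : 0 ≤ κM := hκm.trans (hν₁.1.trans hν₁.2)
  rw [← log_mul (by positivity) (by positivity), ← log_mul (by positivity) (by positivity),
    ← mutualInfoArg_self, ← mutualInfoArg_self]
  have hlower := mutualInfoArg_mono hρ hx₁ hx₂ hκm hκm hν₁.1 hν₂.1
  have hpos : 0 < mutualInfoArg ρ x₁ x₂ κm κm := by rw [mutualInfoArg_self]; positivity
  exact ⟨log_le_log hpos hlower, log_le_log (hpos.trans_le hlower)
    (mutualInfoArg_mono hρ hx₁ hx₂ (hκm.trans hν₁.1) (hκm.trans hν₂.1) hν₁.2 hν₂.2)⟩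

end MutualInfoArg

theorem stmt_17_general (lm lM : ℝ) (hlm : 0 < lm)
    (ν₁ ν₂ : ℝ → ℝ) (hm1 : Measurable ν₁) (hm2 : Measurable ν₂)
    (hae : ∀ᵐ ω ∂(volume.restrict (Set.Icc (-π) π)),
      (lm ≤ ν₁ ω ∧ ν₁ ω ≤ lM) ∧ (lm ≤ ν₂ ω ∧ ν₂ ω ≤ lM))
    (x₁ x₂ ρ : ℝ) (hx₁ : 0 < x₁) (hx₂ : 0 < x₂) (hρ : 0 < ρ) :
    Real.log (1 + ρ * x₁ * lm) + Real.log (1 + ρ * x₂ * lm) ≤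
      (1 / (2 * π)) *
        ∫ ω in Set.Icc (-π) π,
          Real.log (1 + (ρ / 2) * (x₁ + x₂) * (ν₁ ω + ν₂ ω)
            + ρ^2 * x₁ * x₂ * (ν₁ ω * ν₂ ω)) ∧
    (1 / (2 * π)) *
        ∫ ω in Set.Icc (-π) π,
          Real.log (1 + (ρ / 2) * (x₁ + x₂) * (ν₁ ω + ν₂ ω)
            + ρ^2 * x₁ * x₂ * (ν₁ ω * ν₂ ω))
      ≤ Real.log (1 + ρ * x₁ * lM) + Real.log (1 + ρ * x₂ * lM) := by
  have hbounds : ∀ᵐ ω ∂(volume.restrict (Icc (-π) π)),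
      log (mutualInfoArg ρ x₁ x₂ (ν₁ ω) (ν₂ ω)) ∈
        Icc (log (1 + ρ * x₁ * lm) + log (1 + ρ * x₂ * lm))
          (log (1 + ρ * x₁ * lM) + log (1 + ρ * x₂ * lM)) :=
    hae.mono fun ω h => log_mutualInfoArg_mem_Icc hρ.le hx₁.le hx₂.le hlm.le h.1 h.2
  have hmeas : AEStronglyMeasurable (fun ω => log (mutualInfoArg ρ x₁ x₂ (ν₁ ω) (ν₂ ω)))
      (volume.restrict (Icc (-π) π)) :=
    (Measurable.log (by unfold mutualInfoArg; fun_prop)).aestronglyMeasurable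
  have havg := setAverage_mem_Icc_of_ae_mem_Icc (by simp) (by simp [pi_pos]) hmeas hbounds
  rwa [setAverage_eq, Real.volume_real_Icc_of_le (by linarith [pi_pos]), sub_neg_eq_add,
    ← two_mul, smul_eq_mul, inv_eq_one_div] at havg

/-- two-sided parallel-channel bounds on the limiting mutual
information of the asynchronous space-time-coded relay–destination channel, when
the eigenvalue functions `ν₁, ν₂` are bounded between `λ_m` and `λ_M` a.e. -/
theorem stmt_17 (lm lM : ℝ) (hlm : 0 < lm) (hlmM : lm ≤ lM)
    (ν₁ ν₂ : ℝ → ℝ) (hm1 : Measurable ν₁) (hm2 : Measurable ν₂)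
    (hae : ∀ᵐ ω ∂(volume.restrict (Set.Icc (-π) π)),
      (lm ≤ ν₁ ω ∧ ν₁ ω ≤ lM) ∧ (lm ≤ ν₂ ω ∧ ν₂ ω ≤ lM))
    (x₁ x₂ ρ : ℝ) (hx₁ : 0 < x₁) (hx₂ : 0 < x₂) (hρ : 0 < ρ) :
    Real.log (1 + ρ * x₁ * lm) + Real.log (1 + ρ * x₂ * lm) ≤
      (1 / (2 * π)) *
        ∫ ω in Set.Icc (-π) π,
          Real.log (1 + (ρ / 2) * (x₁ + x₂) * (ν₁ ω + ν₂ ω)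
            + ρ^2 * x₁ * x₂ * (ν₁ ω * ν₂ ω)) ∧
    (1 / (2 * π)) *
        ∫ ω in Set.Icc (-π) π,
          Real.log (1 + (ρ / 2) * (x₁ + x₂) * (ν₁ ω + ν₂ ω)
            + ρ^2 * x₁ * x₂ * (ν₁ ω * ν₂ ω))
      ≤ Real.log (1 + ρ * x₁ * lM) + Real.log (1 + ρ * x₂ * lM) :=
  stmt_17_general lm lM hlm ν₁ ν₂ hm1 hm2 hae x₁ x₂ ρ hx₁ hx₂ hρ
end

section
/- Let c > 0 and let a ∈ ℝ with |a| < 1/2. Then (1/(2π))·∫_{−π}^{π} ln(1 + c·(1 + 2a·cos ω)) dω = ln(1+c) + ln( (1 + √(1 − (2ca/(1+c))²)) / 2 ); moreover ln(1+c) − ln 2 < (1/(2π))·∫_{−π}^{π} ln(1 + c·(1 + 2a·cos ω)) dω ≤ ln(1+c). -/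
/-!
Writing `b = 2ca/(1+c)`, the integrand factors as `log (1 + c) + log (1 + b cos ω)`, and `|b| < 1`.
With `s = √(1 - b²)` and `r = b/(1+s)` one has `1 + b cos θ = (1+s)/2 · |e^{iθ} + r|²`, and
`log |e^{iθ} + r|` has mean zero over the unit circle because `|r| < 1` (the function `log ‖z - a‖`
is harmonic on the disc for `‖a‖ < 1`). This gives the closed form; the bounds follow from
`1/2 < (1+s)/2 ≤ 1`.
-/

open MeasureTheory Real

theorem Function.Periodic.setIntegral_Icc_add_eq {E : Type*} [NormedAddCommGroup E]
    [NormedSpace ℝ E] {f : ℝ → E} {T : ℝ} (hf : f.Periodic T)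
    (hT : 0 ≤ T) (t : ℝ) : ∫ x in Set.Icc t (t + T), f x = ∫ x in 0..T, f x := by
  rw [integral_Icc_eq_integral_Ioc, ← intervalIntegral.integral_of_le (by linarith),
    hf.intervalIntegral_add_eq t 0, zero_add]

theorem norm_circleMap_zero_one_add_sq (r θ : ℝ) :
    ‖circleMap 0 1 θ + r‖ ^ 2 = 1 + 2 * r * cos θ + r ^ 2 := by
  rw [Complex.sq_norm, Complex.normSq_apply]
  simp only [circleMap, Complex.ofReal_one, one_mul, zero_add, Complex.add_re,
    Complex.exp_ofReal_mul_I_re, Complex.ofReal_re, Complex.add_im, Complex.exp_ofReal_mul_I_im,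
    Complex.ofReal_im, add_zero]
  nlinarith [sin_sq_add_cos_sq θ]

theorem integral_log_one_add_two_mul_cos_add_sq {r : ℝ} (hr : |r| < 1) :
    ∫ θ in 0..2 * π, log (1 + 2 * r * cos θ + r ^ 2) = 0 := by
  have hmean := circleAverage_log_norm_sub_const₀ (a := -(r : ℂ)) (by simpa using hr)
  rw [circleAverage_def, smul_eq_zero_iff_right (by positivity)] at hmean
  calc ∫ θ in 0..2 * π, log (1 + 2 * r * cos θ + r ^ 2)
      = ∫ θ in 0..2 * π, 2 * log ‖circleMap 0 1 θ - -(r : ℂ)‖ := by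
        refine intervalIntegral.integral_congr fun θ _ => ?_
        rw [sub_neg_eq_add, ← norm_circleMap_zero_one_add_sq, log_pow, Nat.cast_ofNat]
    _ = 0 := by rw [intervalIntegral.integral_const_mul, hmean, mul_zero]

theorem one_add_mul_cos_pos {b : ℝ} (hb : |b| < 1) (θ : ℝ) : 0 < 1 + b * cos θ := by
  have : |b * cos θ| < 1 := by
    rw [abs_mul]
    exact (mul_le_of_le_one_right (abs_nonneg b) (abs_cos_le_one θ)).trans_lt hb
  linarith [neg_abs_le (b * cos θ)]

theorem integral_log_one_add_mul_cos {b : ℝ} (hb : |b| < 1) :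
    ∫ θ in 0..2 * π, log (1 + b * cos θ) = 2 * π * log ((1 + √(1 - b ^ 2)) / 2) := by
  set s := √(1 - b ^ 2)
  have hs : s ^ 2 = 1 - b ^ 2 := sq_sqrt (by nlinarith [sq_abs b, abs_nonneg b])
  have hs0 : 0 ≤ s := sqrt_nonneg _
  have hs1 : 0 < 1 + s := by linarith
  set r := b / (1 + s)
  have hr : |r| < 1 := by
    rw [abs_div, abs_of_pos hs1, div_lt_one hs1]
    linarith
  -- `r` is the root of `b r² - 2 r + b = 0` inside the unit disc, i.e. `2 r / (1 + r²) = b`.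
  have hfactor : ∀ θ, 1 + b * cos θ = (1 + s) / 2 * (1 + 2 * r * cos θ + r ^ 2) := fun θ => by
    simp only [r]
    field_simp
    linear_combination -hs
  have hpos : ∀ θ, 0 < 1 + 2 * r * cos θ + r ^ 2 := fun θ =>
    pos_of_mul_pos_right ((hfactor θ) ▸ one_add_mul_cos_pos hb θ) (by positivity)
  have hcont : Continuous fun θ => log (1 + 2 * r * cos θ + r ^ 2) :=
    (by fun_prop : Continuous fun θ => 1 + 2 * r * cos θ + r ^ 2).log fun θ => (hpos θ).ne'
  calc ∫ θ in 0..2 * π, log (1 + b * cos θ)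
      = ∫ θ in 0..2 * π, (log ((1 + s) / 2) + log (1 + 2 * r * cos θ + r ^ 2)) :=
        intervalIntegral.integral_congr fun θ _ => by
          rw [hfactor θ, log_mul (by positivity) (hpos θ).ne']
    _ = 2 * π * log ((1 + s) / 2) := by
        rw [intervalIntegral.integral_add intervalIntegrable_const (hcont.intervalIntegrable _ _),
          integral_log_one_add_two_mul_cos_add_sq hr, intervalIntegral.integral_const]
        simp

theorem neg_log_two_lt_log_one_add_sqrt_div_two {x : ℝ} (hx : 0 < x) :
    -log 2 < log ((1 + √x) / 2) := by
  rw [← log_inv, inv_eq_one_div]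
  exact log_lt_log one_half_pos (by linarith [sqrt_pos.2 hx])

theorem log_one_add_sqrt_div_two_nonpos {x : ℝ} (hx : x ≤ 1) : log ((1 + √x) / 2) ≤ 0 :=
  log_nonpos (by positivity) (by linarith [sqrt_le_one.2 hx])

theorem abs_two_mul_mul_div_one_add_lt_one {c a : ℝ} (hc : 0 ≤ c) (ha : |a| < 1 / 2) :
    |2 * c * a / (1 + c)| < 1 := by
  have hc1 : 0 < 1 + c := by linarith
  rw [abs_div, abs_of_pos hc1, div_lt_one hc1, abs_mul, abs_of_nonneg (by positivity : 0 ≤ 2 * c)]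
  nlinarith

theorem integral_log_one_add_mul_one_add_two_mul_cos {c a : ℝ} (hc : 0 ≤ c) (ha : |a| < 1 / 2) :
    ∫ ω in Set.Icc (-π) π, log (1 + c * (1 + 2 * a * cos ω))
      = 2 * π * (log (1 + c) + log ((1 + √(1 - (2 * c * a / (1 + c)) ^ 2)) / 2)) := by
  have hc1 : 0 < 1 + c := by linarith
  set b := 2 * c * a / (1 + c)
  have hb : |b| < 1 := abs_two_mul_mul_div_one_add_lt_one hc ha
  have hfactor : ∀ ω, 1 + c * (1 + 2 * a * cos ω) = (1 + c) * (1 + b * cos ω) := fun ω => by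
    simp only [b]
    field_simp
    ring
  have hperiodic : Function.Periodic (fun ω => log (1 + c * (1 + 2 * a * cos ω))) (2 * π) :=
    fun ω => by simp only [cos_add_two_pi]
  have hcont : Continuous fun ω => log (1 + b * cos ω) :=
    (by fun_prop : Continuous fun ω => 1 + b * cos ω).log fun ω => (one_add_mul_cos_pos hb ω).ne'
  calc ∫ ω in Set.Icc (-π) π, log (1 + c * (1 + 2 * a * cos ω))
      = ∫ ω in 0..2 * π, log (1 + c * (1 + 2 * a * cos ω)) := by
        rw [← hperiodic.setIntegral_Icc_add_eq two_pi_pos.le (-π)]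
        ring_nf
    _ = ∫ ω in 0..2 * π, (log (1 + c) + log (1 + b * cos ω)) :=
        intervalIntegral.integral_congr fun ω _ => by
          rw [hfactor ω, log_mul hc1.ne' (one_add_mul_cos_pos hb ω).ne']
    _ = 2 * π * (log (1 + c) + log ((1 + √(1 - b ^ 2)) / 2)) := by
        rw [intervalIntegral.integral_add intervalIntegrable_const (hcont.intervalIntegrable _ _),
          integral_log_one_add_mul_cos hb, intervalIntegral.integral_const]
        simp only [sub_zero, smul_eq_mul]
        ring

/-- closed form and bounds for the direct-link mutual information
`(1/2π) ∫_{-π}^{π} ln(1 + c(1 + 2a cos ω)) dω` with `|a| < 1/2`, `c > 0`. -/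
theorem stmt_18 (c a : ℝ) (hc : 0 < c) (ha : |a| < 1/2) :
    (1 / (2 * π)) *
        (∫ ω in Set.Icc (-π) π, Real.log (1 + c * (1 + 2 * a * Real.cos ω)))
      = Real.log (1 + c)
        + Real.log ((1 + Real.sqrt (1 - (2 * c * a / (1 + c))^2)) / 2) ∧
    Real.log (1 + c) - Real.log 2 <
      (1 / (2 * π)) *
        (∫ ω in Set.Icc (-π) π, Real.log (1 + c * (1 + 2 * a * Real.cos ω))) ∧
    (1 / (2 * π)) *
        (∫ ω in Set.Icc (-π) π, Real.log (1 + c * (1 + 2 * a * Real.cos ω)))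
      ≤ Real.log (1 + c) := by
  have hb : (2 * c * a / (1 + c)) ^ 2 < 1 :=
    sq_lt_one_iff_abs_lt_one _ |>.2 (abs_two_mul_mul_div_one_add_lt_one hc.le ha)
  rw [integral_log_one_add_mul_one_add_two_mul_cos hc.le ha, ← mul_assoc, one_div,
    inv_mul_cancel₀ two_pi_pos.ne', one_mul]
  exact ⟨rfl, by linarith [neg_log_two_lt_log_one_add_sqrt_div_two (sub_pos.2 hb)],
    by linarith [log_one_add_sqrt_div_two_nonpos (sub_le_self 1 (sq_nonneg (2 * c * a / (1 + c))))]⟩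
end
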